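/- arXiv:2601.15444 — 9 statements merged into one kernel-verified Lean document; each statement's English description precedes it below -/
import Mathlib

section
/- Let K ⊆ ℝ^n be a closed, convex, unbounded set with non-empty interior. If the interior of K contains a point of ℤ^n, then int(K) ∩ ℤ^n is an infinite set. -/
/-!
Let `x` be a lattice point with `ball x ε ⊆ K`. Since `K` is closed, convex and unbounded, it
contains a ray `x + ℝ≥0 • v` with `‖v‖ = 1`, and then, by convexity, the whole tube of radius `ε`
around that ray. Recurrence of the orbit of `v` in the compact torus `(ℝ / ℤ)ⁿ` gives arbitrarily
large `m : ℕ` with `m • v` within `ε` of an integer vector `z`; the lattice points `x + z` then lie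
in the interior of `K` and have unbounded norm.
-/

open Filter Metric Topology Set

theorem exists_le_nsmul_norm_lt {A : Type*} [SeminormedAddCommGroup A] [CompactSpace A]
    (ξ : A) {ε : ℝ} (hε : 0 < ε) (M : ℕ) : ∃ m ≥ M, ‖m • ξ‖ < ε := by
  obtain ⟨_, -, φ, hφ, hlim⟩ :=
    isCompact_univ.tendsto_subseq (x := fun k : ℕ => k • ξ) fun _ => mem_univ _
  obtain ⟨N, hN⟩ := Metric.cauchySeq_iff'.1 hlim.cauchySeq ε hε
  have hN_le : N ≤ φ N := hφ.id_le N
  have hM_le : φ N + M ≤ φ (φ N + M) := hφ.id_le _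
  refine ⟨φ (φ N + M) - φ N, by omega, ?_⟩
  rw [sub_nsmul _ (by omega), ← sub_eq_add_neg, ← dist_eq_norm]
  exact hN (φ N + M) (by omega)

theorem exists_le_dist_intCast_lt {ι : Type*} [Fintype ι] (v : ι → ℝ) {ε : ℝ} (hε : 0 < ε)
    (M : ℕ) : ∃ m ≥ M, ∃ z : ι → ℤ, dist ((m : ℝ) • v) (fun i => (z i : ℝ)) < ε := by
  obtain ⟨m, hmM, hm⟩ :=
    exists_le_nsmul_norm_lt (fun i => (v i : UnitAddCircle)) hε M
  refine ⟨m, hmM, fun i => round ((m : ℝ) * v i), (dist_pi_lt_iff hε).2 fun i => ?_⟩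
  have hi : ‖((m * v i : ℝ) : UnitAddCircle)‖ < ε := by
    simpa [← nsmul_eq_mul, AddCircle.coe_nsmul] using (norm_le_pi_norm _ i).trans_lt hm
  rwa [UnitAddCircle.norm_eq, ← Real.dist_eq] at hi

theorem Convex.exists_ray_subset_of_not_isBounded {E : Type*} [NormedAddCommGroup E]
    [NormedSpace ℝ E] [ProperSpace E] {K : Set E} (hKc : IsClosed K) (hKconv : Convex ℝ K)
    (hKunb : ¬ Bornology.IsBounded K) {x : E} (hx : x ∈ K) :
    ∃ v : E, ‖v‖ = 1 ∧ ∀ t : ℝ, 0 ≤ t → x + t • v ∈ K := by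
  have hfar : ∀ r : ℝ, ∃ y ∈ K, r < ‖y - x‖ := by
    simpa [isBounded_iff_subset_closedBall x, subset_def, dist_eq_norm] using hKunb
  choose y hyK hy using fun k : ℕ => hfar k
  have hy_ne : ∀ k, y k - x ≠ 0 := fun k => norm_pos_iff.1 ((Nat.cast_nonneg k).trans_lt (hy k))
  set u : ℕ → E := fun k => ‖y k - x‖⁻¹ • (y k - x)
  obtain ⟨v, hv, φ, hφ, hlim⟩ := (isCompact_sphere (0 : E) 1).tendsto_subseq (x := u)
    fun k => mem_sphere_zero_iff_norm.2 (norm_smul_inv_norm (hy_ne k))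
  refine ⟨v, mem_sphere_zero_iff_norm.1 hv, fun t ht => ?_⟩
  refine hKc.mem_of_tendsto (tendsto_const_nhds.add (hlim.const_smul t)) ?_
  filter_upwards [hφ.tendsto_atTop.eventually (tendsto_natCast_atTop_atTop.eventually_gt_atTop t)]
    with k hk
  have hdist : t < ‖y (φ k) - x‖ := hk.trans (hy _)
  have hmem := hKconv.add_smul_sub_mem hx (hyK (φ k))
    ⟨div_nonneg ht (norm_nonneg _), (div_le_one (ht.trans_lt hdist)).2 hdist.le⟩
  rwa [div_eq_mul_inv, mul_smul] at hmem

theorem Convex.ball_add_smul_subset {E : Type*} [SeminormedAddCommGroup E] [NormedSpace ℝ E]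
    {K : Set E} (hK : Convex ℝ K) {x v : E} {ε t : ℝ} (hball : ball x ε ⊆ K)
    (hray : ∀ s : ℝ, 0 ≤ s → x + s • v ∈ K) (ht : 0 ≤ t) : ball (x + t • v) ε ⊆ K := by
  -- `w` is a convex combination of a point of `ball x ε` and a point further out on the ray
  intro w hw
  have hε : 0 < ε := pos_of_mem_ball hw
  set d := w - (x + t • v)
  have hd : ‖d‖ / ε < 1 := (div_lt_one hε).2 (mem_ball_iff_norm.1 hw)
  obtain ⟨s, hds, hs1⟩ := exists_between hd
  have hs0 : 0 < s := (div_nonneg (norm_nonneg d) hε.le).trans_lt hds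
  have ha : x + s⁻¹ • d ∈ K := hball <| by
    rw [mem_ball_iff_norm, add_sub_cancel_left, norm_smul, norm_inv, Real.norm_of_nonneg hs0.le,
      inv_mul_lt_iff₀ hs0]
    exact (div_lt_iff₀ hε).1 hds
  have hb : x + ((1 - s)⁻¹ * t) • v ∈ K :=
    hray _ (mul_nonneg (inv_nonneg.2 (sub_pos.2 hs1).le) ht)
  have hw_eq : s • (x + s⁻¹ • d) + (1 - s) • (x + ((1 - s)⁻¹ * t) • v) = w := by
    rw [smul_add, smul_add, smul_smul, smul_smul, ← mul_assoc, mul_inv_cancel₀ hs0.ne',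
      mul_inv_cancel₀ (sub_pos.2 hs1).ne', one_smul, one_mul]
    simp only [d]
    module
  exact hw_eq ▸ hK ha hb hs0.le (sub_pos.2 hs1).le (add_sub_cancel s 1)

theorem exists_add_intCast_mem_interior_lt_norm {ι : Type*} [Fintype ι] {K : Set (ι → ℝ)}
    (hK : Convex ℝ K) {x v : ι → ℝ} {ε : ℝ} (hε : 0 < ε) (hball : ball x ε ⊆ K) (hv : ‖v‖ = 1)
    (hray : ∀ t : ℝ, 0 ≤ t → x + t • v ∈ K) (R : ℝ) :
    ∃ z : ι → ℤ, x + (fun i => (z i : ℝ)) ∈ interior K ∧ R < ‖x + fun i => (z i : ℝ)‖ := by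
  obtain ⟨M, hM⟩ := exists_nat_gt (R + ‖x‖ + ε)
  obtain ⟨m, hmM, z, hz⟩ := exists_le_dist_intCast_lt v hε M
  have hz_ball : x + (fun i => (z i : ℝ)) ∈ ball (x + (m : ℝ) • v) ε := by
    rwa [mem_ball, dist_add_left, dist_comm]
  refine ⟨z, interior_maximal (hK.ball_add_smul_subset hball hray m.cast_nonneg) isOpen_ball
    hz_ball, ?_⟩
  have hmv : ‖(m : ℝ) • v‖ = m := by simp [norm_smul, hv]
  have hM_le : (M : ℝ) ≤ m := by exact_mod_cast hmM
  have hx_mv : ‖(m : ℝ) • v‖ ≤ ‖x + (m : ℝ) • v‖ + ‖x‖ := by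
    simpa using norm_sub_le (x + (m : ℝ) • v) x
  linarith [mem_ball_iff_norm'.1 hz_ball,
    norm_sub_norm_le (x + (m : ℝ) • v) (x + fun i => (z i : ℝ))]

theorem interior_lattice_infinite_general {n : ℕ} (K : Set (Fin n → ℝ))
    (hKc : IsClosed K) (hKconv : Convex ℝ K) (hKunb : ¬ Bornology.IsBounded K)
    (hlat : ∃ x ∈ interior K, ∀ i, ∃ m : ℤ, x i = (m : ℝ)) :
    {x ∈ interior K | ∀ i, ∃ m : ℤ, x i = (m : ℝ)}.Infinite := by
  obtain ⟨x, hx, hx_lat⟩ := hlat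
  obtain ⟨ε, hε, hball⟩ := Metric.isOpen_iff.1 isOpen_interior x hx
  obtain ⟨v, hv, hray⟩ :=
    hKconv.exists_ray_subset_of_not_isBounded hKc hKunb (interior_subset hx)
  intro hfin
  obtain ⟨R, hR⟩ := isBounded_iff_forall_norm_le.1 hfin.isBounded
  obtain ⟨z, hz_int, hz_norm⟩ := exists_add_intCast_mem_interior_lt_norm hKconv hε
    (hball.trans interior_subset) hv hray R
  refine (hR _ ⟨hz_int, fun i => ?_⟩).not_gt hz_norm
  obtain ⟨q, hq⟩ := hx_lat i
  exact ⟨q + z i, by simp [hq]⟩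

/-- If `K ⊆ ℝⁿ` is closed, convex, unbounded, with non-empty interior, and the
interior of `K` contains a lattice point, then `int(K) ∩ ℤⁿ` is infinite. -/
theorem interior_lattice_infinite {n : ℕ} (K : Set (Fin n → ℝ))
    (hKc : IsClosed K) (hKconv : Convex ℝ K) (hKunb : ¬ Bornology.IsBounded K)
    (hKint : (interior K).Nonempty)
    (hlat : ∃ x ∈ interior K, ∀ i, ∃ m : ℤ, x i = (m : ℝ)) :
    {x ∈ interior K | ∀ i, ∃ m : ℤ, x i = (m : ℝ)}.Infinite :=
  interior_lattice_infinite_general K hKc hKconv hKunb hlat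
end

section
/- Let K ⊆ ℝ^2 be a closed, convex, unbounded set with non-empty interior. If K contains a point of ℤ^2, then K ∩ ℤ^2 is infinite. -/
/-!
A closed convex unbounded set contains a ray `p + ℝ≥0 • v` from each of its points, all with the
same direction `v`. If `v` is a positive multiple of an integer vector, the ray from the given
lattice point carries infinitely many lattice points. Otherwise the slope `α = v 1 / v 0` is
irrational and `K` contains the half-tube `B(c, r) + ℝ≥0 • v` around an interior point `c`. By
Dirichlet's theorem some `q * α` lies within `r` of an integer without being one, and adding up
copies of this small step brings `β + k * α` within `r` of an integer for arbitrarily large `k`: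
these are lattice points arbitrarily far out in the tube.
-/

open Filter Topology

theorem Convex.add_smul_mem_of_ray {E : Type*} [AddCommGroup E] [Module ℝ E] [TopologicalSpace E]
    [IsTopologicalAddGroup E] [ContinuousSMul ℝ E] {K : Set E} (hK : Convex ℝ K)
    (hKc : IsClosed K) {p v : E} (hray : ∀ t : ℝ, 0 ≤ t → p + t • v ∈ K) {x : E} (hx : x ∈ K)
    {t : ℝ} (ht : 0 ≤ t) : x + t • v ∈ K := by
  have hlim : Tendsto (fun s : ℝ => x + s • (p - x) + t • v) (𝓝[>] 0) (𝓝 (x + t • v)) := by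
    have : Continuous fun s : ℝ => x + s • (p - x) + t • v := by fun_prop
    simpa using (this.tendsto 0).mono_left nhdsWithin_le_nhds
  refine hKc.mem_of_tendsto hlim ?_
  filter_upwards [Ioc_mem_nhdsGT one_pos] with s ⟨hs0, hs1⟩
  -- `x + s • (p - x) + t • v` lies on the segment from `x` to the point `p + (t / s) • v`
  have := hK.add_smul_sub_mem hx (hray (t / s) (by positivity)) ⟨hs0.le, hs1⟩
  rwa [add_sub_right_comm, smul_add, smul_smul, mul_div_cancel₀ t hs0.ne', ← add_assoc] at this

theorem Convex.exists_ray_of_not_isBounded {E : Type*} [NormedAddCommGroup E] [NormedSpace ℝ E]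
    [ProperSpace E] {K : Set E} (hK : Convex ℝ K) (hKc : IsClosed K)
    (hKunb : ¬Bornology.IsBounded K) {p : E} (hp : p ∈ K) :
    ∃ v : E, v ≠ 0 ∧ ∀ t : ℝ, 0 ≤ t → p + t • v ∈ K := by
  have hfar : ∀ n : ℕ, ∃ y ∈ K, (n : ℝ) < ‖y - p‖ := by
    intro n
    by_contra! h
    exact hKunb ((Metric.isBounded_iff_subset_closedBall p).2
      ⟨n, fun y hy => by simpa [dist_eq_norm] using h y hy⟩)
  choose y hyK hy using hfar
  have hy0 : ∀ n, ‖y n - p‖ ≠ 0 := fun n => ((Nat.cast_nonneg n).trans_lt (hy n)).ne'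
  set u : ℕ → E := fun n => ‖y n - p‖⁻¹ • (y n - p)
  have hu : ∀ n, u n ∈ Metric.sphere (0 : E) 1 := fun n => by simp [u, norm_smul, hy0 n]
  obtain ⟨v, hv, φ, hφ, hlim⟩ := (isCompact_sphere (0 : E) 1).tendsto_subseq hu
  refine ⟨v, by rintro rfl; simp at hv, fun t ht => ?_⟩
  refine hKc.mem_of_tendsto ((hlim.const_smul t).const_add p) ?_
  filter_upwards [eventually_ge_atTop ⌈t⌉₊] with n hn
  have htn : t ≤ ‖y (φ n) - p‖ :=
    calc t ≤ ⌈t⌉₊ := Nat.le_ceil t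
      _ ≤ φ n := by exact_mod_cast hn.trans (hφ.id_le n)
      _ ≤ ‖y (φ n) - p‖ := (hy _).le
  have := hK.add_smul_sub_mem hp (hyK (φ n))
    ⟨by positivity, div_le_one_of_le₀ htn (norm_nonneg _)⟩
  simpa [u, smul_smul, div_eq_mul_inv] using this

theorem exists_nat_ge_abs_add_mul_sub_lt_of_pos {β γ : ℝ} (hγ : 0 < γ) (N : ℕ) :
    ∃ m ≥ N, ∃ M : ℤ, |β + m * γ - M| < γ := by
  set M : ℤ := ⌈β + N * γ⌉
  set m : ℕ := ⌊(M - β) / γ⌋₊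
  have hd : (N : ℝ) ≤ (M - β) / γ := by
    rw [le_div_iff₀ hγ]; linarith [Int.le_ceil (β + N * γ)]
  have hm₁ : m * γ ≤ M - β := (le_div_iff₀ hγ).1 (Nat.floor_le ((Nat.cast_nonneg N).trans hd))
  have hm₂ : M - β < (m + 1) * γ := (div_lt_iff₀ hγ).1 (Nat.lt_floor_add_one _)
  refine ⟨m, Nat.le_floor hd, M, abs_sub_lt_iff.2 ⟨by linarith, by linarith⟩⟩

theorem exists_nat_ge_abs_add_mul_sub_lt_abs {β γ : ℝ} (hγ : γ ≠ 0) (N : ℕ) :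
    ∃ m ≥ N, ∃ M : ℤ, |β + m * γ - M| < |γ| := by
  rcases hγ.lt_or_gt with hneg | hpos
  · obtain ⟨m, hm, M, hM⟩ := exists_nat_ge_abs_add_mul_sub_lt_of_pos (β := -β) (neg_pos.2 hneg) N
    refine ⟨m, hm, -M, ?_⟩
    rw [abs_of_neg hneg, ← abs_neg]
    convert hM using 2
    push_cast
    ring
  · simpa only [abs_of_pos hpos] using exists_nat_ge_abs_add_mul_sub_lt_of_pos hpos N

theorem Irrational.exists_nat_ge_abs_add_mul_sub_lt {α : ℝ} (hα : Irrational α) (β : ℝ) {r : ℝ}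
    (hr : 0 < r) (N : ℕ) : ∃ k ≥ N, ∃ M : ℤ, |β + k * α - M| < r := by
  obtain ⟨n, hn⟩ := exists_nat_one_div_lt hr
  obtain ⟨q, hq, -, hqα⟩ := Real.exists_nat_abs_mul_sub_round_le α n.succ_pos
  have hγ : q * α - round (q * α) ≠ 0 := sub_ne_zero.2 ((hα.natCast_mul hq.ne').ne_int _)
  have hγr : |q * α - round (q * α)| < r := by
    refine hqα.trans_lt (lt_of_le_of_lt ?_ hn)
    gcongr
    linarith
  obtain ⟨m, hm, M, hM⟩ := exists_nat_ge_abs_add_mul_sub_lt_abs (β := β) hγ N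
  refine ⟨m * q, hm.trans (Nat.le_mul_of_pos_right m hq), M + m * round (q * α), ?_⟩
  calc |β + ↑(m * q) * α - ↑(M + m * round (q * α))|
      = |β + m * (q * α - round (q * α)) - M| := by push_cast; ring_nf
    _ < r := hM.trans hγr

theorem exists_pos_mul_int_or_irrational {v : Fin 2 → ℝ} (hv : v ≠ 0) :
    (∃ s : ℝ, 0 < s ∧ ∀ i, ∃ m : ℤ, s * v i = m) ∨ (v 0 ≠ 0 ∧ Irrational (v 1 / v 0)) := by
  suffices h : (∃ s : ℝ, s ≠ 0 ∧ ∀ i, ∃ m : ℤ, s * v i = m) ∨ (v 0 ≠ 0 ∧ Irrational (v 1 / v 0)) by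
    refine h.imp_left fun ⟨s, hs, hsv⟩ => ⟨|s|, abs_pos.2 hs, fun i => ?_⟩
    obtain ⟨m, hm⟩ := hsv i
    rcases abs_choice s with h | h
    · exact ⟨m, by rw [h, hm]⟩
    · exact ⟨-m, by rw [h, neg_mul, hm, Int.cast_neg]⟩
  by_cases h0 : v 0 = 0
  · have h1 : v 1 ≠ 0 := fun h1 => hv (funext <| Fin.forall_fin_two.2 ⟨h0, h1⟩)
    refine .inl ⟨(v 1)⁻¹, inv_ne_zero h1, Fin.forall_fin_two.2 ⟨⟨0, ?_⟩, ⟨1, ?_⟩⟩⟩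
    · simp [h0]
    · simp [h1]
  by_cases hα : Irrational (v 1 / v 0)
  · exact .inr ⟨h0, hα⟩
  obtain ⟨q, hq⟩ : v 1 / v 0 ∈ Set.range ((↑) : ℚ → ℝ) := not_not.1 hα
  refine .inl ⟨q.den / v 0, div_ne_zero (by positivity) h0,
    Fin.forall_fin_two.2 ⟨⟨q.den, ?_⟩, ⟨q.num, ?_⟩⟩⟩
  · rw [div_mul_cancel₀ _ h0]
    norm_cast
  · rw [div_mul_comm, ← hq]
    exact_mod_cast Rat.mul_den_eq_num q

theorem infinite_int_points_of_ray {ι : Type*} {K : Set (ι → ℝ)} {x₀ v : ι → ℝ}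
    (hx₀ : ∀ i, ∃ m : ℤ, x₀ i = m) (hray : ∀ t : ℝ, 0 ≤ t → x₀ + t • v ∈ K) (hv : v ≠ 0)
    {s : ℝ} (hs : 0 < s) (hsv : ∀ i, ∃ m : ℤ, s * v i = m) :
    {x ∈ K | ∀ i, ∃ m : ℤ, x i = m}.Infinite := by
  refine Set.infinite_of_injective_forall_mem (f := fun n : ℕ => x₀ + ((n : ℝ) * s) • v)
    (fun a b hab => ?_) (fun n => ⟨hray _ (by positivity), fun i => ?_⟩)
  · have := smul_left_injective ℝ hv (add_left_cancel hab)
    exact_mod_cast mul_right_cancel₀ hs.ne' this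
  · obtain ⟨a, ha⟩ := hx₀ i
    obtain ⟨b, hb⟩ := hsv i
    exact ⟨a + n * b, by simp [ha, mul_assoc, hb]⟩

theorem infinite_int_points_near_ray {v : Fin 2 → ℝ} (hv0 : v 0 ≠ 0)
    (hα : Irrational (v 1 / v 0)) (c : Fin 2 → ℝ) {r : ℝ} (hr : 0 < r) :
    {z : Fin 2 → ℝ | (∀ i, ∃ m : ℤ, z i = m) ∧
      ∃ t : ℝ, 0 ≤ t ∧ dist z (c + t • v) < r}.Infinite := by
  set α := v 1 / v 0
  refine .of_image (fun z => |z 0|) (Set.infinite_of_not_bddAbove (not_bddAbove_iff.2 fun R => ?_))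
  obtain ⟨N, hN⟩ := exists_nat_gt (|c 0| + |R|)
  obtain ⟨n, M, hn, hnR, hM⟩ : ∃ n M : ℤ, 0 ≤ (n - c 0) / v 0 ∧ R < |(n : ℝ)| ∧
      |c 1 - c 0 * α + n * α - M| < r := by
    rcases hv0.lt_or_gt with hneg | hpos
    · obtain ⟨k, hk, M, hM⟩ := hα.neg.exists_nat_ge_abs_add_mul_sub_lt (c 1 - c 0 * α) hr N
      have hkN : (N : ℝ) ≤ k := by exact_mod_cast hk
      refine ⟨-k, M, div_nonneg_of_nonpos ?_ hneg.le, ?_, by simpa using hM⟩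
      · push_cast; linarith [neg_abs_le (c 0), abs_nonneg R]
      · push_cast; rw [abs_neg, Nat.abs_cast]; linarith [le_abs_self R, abs_nonneg (c 0)]
    · obtain ⟨k, hk, M, hM⟩ := hα.exists_nat_ge_abs_add_mul_sub_lt (c 1 - c 0 * α) hr N
      have hkN : (N : ℝ) ≤ k := by exact_mod_cast hk
      refine ⟨k, M, div_nonneg ?_ hpos.le, ?_, by simpa using hM⟩
      · push_cast; linarith [le_abs_self (c 0), abs_nonneg R]
      · push_cast; rw [Nat.abs_cast]; linarith [le_abs_self R, abs_nonneg (c 0)]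
  -- the ray meets the vertical line through `(n, M)` at height `c 1 - c 0 * α + n * α`
  refine ⟨|(n : ℝ)|, ⟨![n, M], ⟨Fin.forall_fin_two.2 ⟨⟨n, rfl⟩, ⟨M, rfl⟩⟩,
    (n - c 0) / v 0, hn, (dist_pi_lt_iff hr).2 (Fin.forall_fin_two.2 ⟨?_, ?_⟩)⟩, rfl⟩, hnR⟩
  · simp [div_mul_cancel₀ _ hv0, hr]
  · have : c 1 + (n - c 0) / v 0 * v 1 = c 1 - c 0 * α + n * α := by
      simp only [α]; field_simp; ring
    simpa [Real.dist_eq, abs_sub_comm, this] using hM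

/-- If `K ⊆ ℝ²` is closed, convex, unbounded, with non-empty interior, and `K`
contains a lattice point, then `K ∩ ℤ²` is infinite. -/
theorem lattice_infinite_dim2 (K : Set (Fin 2 → ℝ))
    (hKc : IsClosed K) (hKconv : Convex ℝ K) (hKunb : ¬ Bornology.IsBounded K)
    (hKint : (interior K).Nonempty)
    (hlat : ∃ x ∈ K, ∀ i, ∃ m : ℤ, x i = (m : ℝ)) :
    {x ∈ K | ∀ i, ∃ m : ℤ, x i = (m : ℝ)}.Infinite := by
  obtain ⟨x₀, hx₀K, hx₀⟩ := hlat
  obtain ⟨c, hc⟩ := hKint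
  obtain ⟨r, hr, hball⟩ := Metric.mem_nhds_iff.1 (mem_interior_iff_mem_nhds.1 hc)
  obtain ⟨v, hv, hray⟩ := hKconv.exists_ray_of_not_isBounded hKc hKunb hx₀K
  rcases exists_pos_mul_int_or_irrational hv with ⟨s, hs, hsv⟩ | ⟨hv0, hα⟩
  · exact infinite_int_points_of_ray hx₀ hray hv hs hsv
  · refine (infinite_int_points_near_ray hv0 hα c hr).mono ?_
    rintro z ⟨hz, t, ht, hzt⟩
    refine ⟨?_, hz⟩
    have hzt' : z - t • v ∈ Metric.ball c r := by
      rwa [Metric.mem_ball, dist_comm, dist_sub_eq_dist_add_right, dist_comm]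
    simpa using hKconv.add_smul_mem_of_ray hKc hray (hball hzt') ht
end

section
/- The set K = {(x,y,z) ∈ ℝ^3 : (x - √2 z)^2 + (y - 1/3)^2 ≤ 1/9} is closed, convex, unbounded, has non-empty interior, and satisfies K ∩ ℤ^3 = {0}. -/
/-- The set `K = {(x,y,z) : (x - √2 z)² + (y - 1/3)² ≤ 1/9} ⊆ ℝ³` is closed,
convex, unbounded, has non-empty interior, and meets the lattice `ℤ³` only at
the origin. -/
theorem counterexample_dim3 :
    IsClosed {v : Fin 3 → ℝ | (v 0 - Real.sqrt 2 * v 2) ^ 2 + (v 1 - 1 / 3) ^ 2 ≤ 1 / 9} ∧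
    Convex ℝ {v : Fin 3 → ℝ | (v 0 - Real.sqrt 2 * v 2) ^ 2 + (v 1 - 1 / 3) ^ 2 ≤ 1 / 9} ∧
    ¬ Bornology.IsBounded
      {v : Fin 3 → ℝ | (v 0 - Real.sqrt 2 * v 2) ^ 2 + (v 1 - 1 / 3) ^ 2 ≤ 1 / 9} ∧
    (interior
      {v : Fin 3 → ℝ | (v 0 - Real.sqrt 2 * v 2) ^ 2 + (v 1 - 1 / 3) ^ 2 ≤ 1 / 9}).Nonempty ∧
    {v : Fin 3 → ℝ | ((v 0 - Real.sqrt 2 * v 2) ^ 2 + (v 1 - 1 / 3) ^ 2 ≤ 1 / 9) ∧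
        ∀ i, ∃ m : ℤ, v i = (m : ℝ)} = {0} := by
  have hcont : Continuous fun v : Fin 3 → ℝ =>
      (v 0 - Real.sqrt 2 * v 2) ^ 2 + (v 1 - 1 / 3) ^ 2 := by fun_prop
  refine ⟨isClosed_le hcont continuous_const, ?_, ?_, ?_, ?_⟩
  · -- convex
    intro x hx y hy a b ha hb hab
    simp only [Set.mem_setOf_eq, Pi.add_apply, Pi.smul_apply, smul_eq_mul] at *
    have key : ∀ P Q R S : ℝ, P ^ 2 + R ^ 2 ≤ 1 / 9 → Q ^ 2 + S ^ 2 ≤ 1 / 9 →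
        (a * P + b * Q) ^ 2 + (a * R + b * S) ^ 2 ≤ 1 / 9 := by
      intro P Q R S h1 h2
      nlinarith [sq_nonneg (P - Q), sq_nonneg (R - S), mul_nonneg ha hb,
        mul_le_mul_of_nonneg_left h1 ha, mul_le_mul_of_nonneg_left h2 hb]
    have e1 : a * x 0 + b * y 0 - Real.sqrt 2 * (a * x 2 + b * y 2) =
        a * (x 0 - Real.sqrt 2 * x 2) + b * (y 0 - Real.sqrt 2 * y 2) := by ring
    have e2 : a * x 1 + b * y 1 - 1 / 3 =
        a * (x 1 - 1 / 3) + b * (y 1 - 1 / 3) := by linear_combination (1 / 3 : ℝ) * hab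
    rw [e1, e2]
    exact key _ _ _ _ hx hy
  · -- unbounded
    intro hb
    obtain ⟨C, hC⟩ := (Metric.isBounded_iff_subset_closedBall 0).mp hb
    set t : ℝ := |C| + 1 with ht
    set p : Fin 3 → ℝ := ![Real.sqrt 2 * t, 1 / 3, t] with hp
    have hmem : p ∈ {v : Fin 3 → ℝ |
        (v 0 - Real.sqrt 2 * v 2) ^ 2 + (v 1 - 1 / 3) ^ 2 ≤ 1 / 9} := by
      simp [hp, Set.mem_setOf_eq]
    have h1 := hC hmem
    rw [Metric.mem_closedBall, dist_zero_right] at h1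
    have h2 : ‖p 2‖ ≤ C := (norm_le_pi_norm p 2).trans h1
    have h3 : p 2 = t := by simp [hp]
    rw [h3, Real.norm_eq_abs] at h2
    have h4 : t ≤ |t| := le_abs_self t
    have h5 : (0 : ℝ) ≤ |C| := abs_nonneg C
    have h6 : C ≤ |C| := le_abs_self C
    linarith
  · -- interior nonempty
    refine ⟨![0, 1/3, 0], ?_⟩
    have hopen : IsOpen {v : Fin 3 → ℝ |
        (v 0 - Real.sqrt 2 * v 2) ^ 2 + (v 1 - 1 / 3) ^ 2 < 1 / 9} :=
      isOpen_lt hcont continuous_const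
    have hsub : {v : Fin 3 → ℝ |
        (v 0 - Real.sqrt 2 * v 2) ^ 2 + (v 1 - 1 / 3) ^ 2 < 1 / 9} ⊆
        {v : Fin 3 → ℝ | (v 0 - Real.sqrt 2 * v 2) ^ 2 + (v 1 - 1 / 3) ^ 2 ≤ 1 / 9} := by
      intro v hv
      simp only [Set.mem_setOf_eq] at hv ⊢
      exact le_of_lt hv
    apply interior_maximal hsub hopen
    show ((0 : ℝ) - Real.sqrt 2 * 0) ^ 2 + ((1 / 3 : ℝ) - 1 / 3) ^ 2 < 1 / 9
    norm_num
  · -- lattice intersection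
    ext v
    simp only [Set.mem_setOf_eq, Set.mem_singleton_iff]
    constructor
    · rintro ⟨hle, hint⟩
      obtain ⟨m0, h0⟩ := hint 0
      obtain ⟨m1, h1⟩ := hint 1
      obtain ⟨m2, h2⟩ := hint 2
      have hm1 : m1 = 0 := by
        by_contra h
        have habs : (1 : ℝ) ≤ |(m1 : ℝ)| := by
          exact_mod_cast Int.one_le_abs (by exact h)
        rw [h1] at hle
        rcases le_abs.mp habs with hge | hle'
        · nlinarith [sq_nonneg (v 0 - Real.sqrt 2 * v 2)]
        · nlinarith [sq_nonneg (v 0 - Real.sqrt 2 * v 2)]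
      have hv1 : v 1 = 0 := by rw [h1, hm1]; norm_num
      have heq : v 0 = Real.sqrt 2 * v 2 := by
        rw [hv1] at hle
        nlinarith [sq_nonneg (v 0 - Real.sqrt 2 * v 2)]
      have hm2 : m2 = 0 := by
        by_contra h
        have h2r : ((m2 : ℝ)) ≠ 0 := Int.cast_ne_zero.mpr h
        have hs : Real.sqrt 2 = (m0 : ℝ) / (m2 : ℝ) := by
          rw [h0, h2] at heq
          field_simp
          linarith
        have hirr : Irrational ((((m0 : ℚ) / (m2 : ℚ)) : ℚ) : ℝ) := by
          rw [Rat.cast_div, Rat.cast_intCast, Rat.cast_intCast, ← hs]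
          exact irrational_sqrt_two
        exact Rat.not_irrational _ hirr
      have hv2 : v 2 = 0 := by rw [h2, hm2]; norm_num
      have hv0 : v 0 = 0 := by rw [heq, hv2, mul_zero]
      funext i
      fin_cases i
      · simpa using hv0
      · simpa using hv1
      · simpa using hv2
    · rintro rfl
      refine ⟨?_, fun i => ⟨0, by simp⟩⟩
      simp only [Pi.zero_apply]
      norm_num
end

section
/- A probability mass function p on ℤ is discrete log-concave in the sense that p_k^2 ≥ p_{k-1} p_{k+1} for all k and its support is a discrete interval, if and only if g = -log p is convex-extensible, i.e., the largest convex lower-semicontinuous function below g on the integers agrees with g at every integer. -/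
open scoped EReal

/-- `-log t`, valued in `(-∞, +∞]`, with the convention `-log 0 = +∞`. -/
noncomputable def negLogE (t : ℝ) : EReal :=
  if t = 0 then ⊤ else ((- Real.log t : ℝ) : EReal)

/-- The convex extension of `g : ℤ → (-∞,+∞]`: the supremum of all affine
functions on `ℝ` lying below `g` on the integers. -/
noncomputable def convExt1 (g : ℤ → EReal) (x : ℝ) : EReal :=
  ⨆ (c : ℝ × ℝ) (_ : ∀ k : ℤ, ((c.1 * (k : ℝ) + c.2 : ℝ) : EReal) ≤ g k),
    ((c.1 * x + c.2 : ℝ) : EReal)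

lemma coe_le_negLogE {r t : ℝ} (h : t ≠ 0 → r ≤ -Real.log t) : (r : EReal) ≤ negLogE t := by
  unfold negLogE
  split
  · exact le_top
  · exact EReal.coe_le_coe_iff.mpr (h ‹_›)

lemma negLogE_of_ne {t : ℝ} (h : t ≠ 0) : negLogE t = ((-Real.log t : ℝ) : EReal) := if_neg h

lemma convExt1_le_int (g : ℤ → EReal) (k : ℤ) : convExt1 g (k : ℝ) ≤ g k :=
  iSup₂_le fun _ hc => hc k

/-- one step of log-concavity turned into convexity of `-log p`. -/
lemma step_ineq (p : ℤ → ℝ) (hlc : ∀ k : ℤ, p (k - 1) * p (k + 1) ≤ p k ^ 2) (j : ℤ)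
    (h1 : 0 < p (j - 1)) (h2 : 0 < p j) (h3 : 0 < p (j + 1)) :
    (-Real.log (p j)) - (-Real.log (p (j - 1))) ≤ (-Real.log (p (j + 1))) - (-Real.log (p j)) := by
  have h := hlc j
  have hlog : Real.log (p (j - 1) * p (j + 1)) ≤ Real.log (p j ^ 2) :=
    Real.log_le_log (by positivity) h
  rw [Real.log_mul h1.ne' h3.ne', Real.log_pow] at hlog
  push_cast at hlog
  linarith

/-- the key lemma: an affine function through `(k, -log p k)` with admissible slope
lies below `-log p` at every point of the support. -/
lemma affine_below (p : ℤ → ℝ)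
    (hint : ∀ a b c : ℤ, a ≤ b → b ≤ c → 0 < p a → 0 < p c → 0 < p b)
    (hlc : ∀ k : ℤ, p (k - 1) * p (k + 1) ≤ p k ^ 2)
    (k : ℤ) (hk : 0 < p k) (s : ℝ)
    (hsl : 0 < p (k - 1) → (-Real.log (p k)) - (-Real.log (p (k - 1))) ≤ s)
    (hsr : 0 < p (k + 1) → s ≤ (-Real.log (p (k + 1))) - (-Real.log (p k))) :
    ∀ m : ℤ, 0 < p m →
      (-Real.log (p k)) + s * ((m : ℝ) - (k : ℝ)) ≤ -Real.log (p m) := by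
  have claimR : ∀ n : ℕ, ∀ m : ℤ, m = k + n + 1 → 0 < p m →
      (s ≤ (-Real.log (p m)) - (-Real.log (p (m - 1)))) ∧
        ((-Real.log (p k)) + s * ((n : ℝ) + 1) ≤ -Real.log (p m)) := by
    intro n
    induction n with
    | zero =>
      intro m hm hpm
      have hmk : m = k + 1 := by omega
      subst hmk
      rw [show k + 1 - 1 = k from by ring]
      have h1 := hsr hpm
      exact ⟨h1, by push_cast; linarith⟩
    | succ n ih =>
      intro m hm hpm
      have hm1 : 0 < p (m - 1) := hint k (m - 1) m (by omega) (by omega) hk hpm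
      have hm2 : 0 < p (m - 2) := hint k (m - 2) m (by omega) (by omega) hk hpm
      obtain ⟨ih1, ih2⟩ := ih (m - 1) (by omega) hm1
      rw [show m - 1 - 1 = m - 2 from by ring] at ih1
      have hstep := step_ineq p hlc (m - 1)
        (by rwa [show m - 1 - 1 = m - 2 from by ring]) hm1
        (by rwa [show m - 1 + 1 = m from by ring])
      rw [show m - 1 - 1 = m - 2 from by ring, show m - 1 + 1 = m from by ring] at hstep
      push_cast
      constructor
      · linarith
      · linarith
  have claimL : ∀ n : ℕ, ∀ m : ℤ, m = k - n - 1 → 0 < p m →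
      ((-Real.log (p (m + 1))) - (-Real.log (p m)) ≤ s) ∧
        ((-Real.log (p k)) - s * ((n : ℝ) + 1) ≤ -Real.log (p m)) := by
    intro n
    induction n with
    | zero =>
      intro m hm hpm
      have hmk : m = k - 1 := by omega
      subst hmk
      rw [show k - 1 + 1 = k from by ring]
      have h1 := hsl hpm
      exact ⟨h1, by push_cast; linarith⟩
    | succ n ih =>
      intro m hm hpm
      have hm1 : 0 < p (m + 1) := hint m (m + 1) k (by omega) (by omega) hpm hk
      have hm2 : 0 < p (m + 2) := hint m (m + 2) k (by omega) (by omega) hpm hk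
      obtain ⟨ih1, ih2⟩ := ih (m + 1) (by omega) hm1
      rw [show m + 1 + 1 = m + 2 from by ring] at ih1
      have hstep := step_ineq p hlc (m + 1)
        (by rwa [show m + 1 - 1 = m from by ring]) hm1
        (by rwa [show m + 1 + 1 = m + 2 from by ring])
      rw [show m + 1 - 1 = m from by ring, show m + 1 + 1 = m + 2 from by ring] at hstep
      push_cast
      constructor
      · linarith
      · linarith
  intro m hm
  rcases lt_trichotomy m k with hmk | hmk | hmk
  · set n : ℕ := (k - m - 1).toNat with hn
    have hn' : (n : ℤ) = k - m - 1 := Int.toNat_of_nonneg (by omega)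
    have := (claimL n m (by omega) hm).2
    have hcast : ((m : ℝ) - (k : ℝ)) = -((n : ℝ) + 1) := by
      have hz : (m : ℤ) = k - n - 1 := by omega
      have : (m : ℝ) = (k : ℝ) - (n : ℝ) - 1 := by exact_mod_cast congrArg (Int.cast : ℤ → ℝ) hz
      linarith
    rw [hcast]
    linarith
  · subst hmk; simp
  · set n : ℕ := (m - k - 1).toNat with hn
    have hn' : (n : ℤ) = m - k - 1 := Int.toNat_of_nonneg (by omega)
    have := (claimR n m (by omega) hm).2
    have hcast : ((m : ℝ) - (k : ℝ)) = (n : ℝ) + 1 := by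
      have hz : (m : ℤ) = k + n + 1 := by omega
      have : (m : ℝ) = (k : ℝ) + (n : ℝ) + 1 := by exact_mod_cast congrArg (Int.cast : ℤ → ℝ) hz
      linarith
    rw [hcast]
    linarith

/-- A p.m.f. `p` on `ℤ` is discrete log-concave (support a discrete interval and
`p k ^ 2 ≥ p (k-1) p (k+1)`) if and only if `g = -log p` is convex-extensible,
i.e. the largest convex l.s.c. function below `g` on the integers agrees with `g`
at every integer. -/
theorem discrete_logConcave_iff_convexExtensible (p : ℤ → ℝ)
    (hp0 : ∀ k, 0 ≤ p k) (hpsum : HasSum p 1) :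
    ((∀ a b c : ℤ, a ≤ b → b ≤ c → 0 < p a → 0 < p c → 0 < p b) ∧
        ∀ k : ℤ, p (k - 1) * p (k + 1) ≤ p k ^ 2) ↔
      ∀ k : ℤ, convExt1 (fun m => negLogE (p m)) (k : ℝ) = negLogE (p k) := by
  have hple1 : ∀ k, p k ≤ 1 := fun k => le_hasSum hpsum k fun j _ => hp0 j
  have hLnn : ∀ m : ℤ, p m ≠ 0 → (0 : ℝ) ≤ -Real.log (p m) := by
    intro m hm
    have hpm : 0 < p m := lt_of_le_of_ne (hp0 m) (Ne.symm hm)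
    have := Real.log_nonpos (hp0 m) (hple1 m)
    linarith
  constructor
  · rintro ⟨hint, hlc⟩ k
    refine le_antisymm (convExt1_le_int _ k) ?_
    rcases eq_or_lt_of_le (hp0 k) with hk | hk
    · -- p k = 0 : the sup is ⊤
      have hk0 : p k = 0 := hk.symm
      have htop : negLogE (p k) = ⊤ := if_pos hk0
      rw [htop]
      -- support lies entirely on one side of k
      have hside : (∀ m : ℤ, m ≤ k → p m = 0) ∨ (∀ m : ℤ, k ≤ m → p m = 0) := by
        by_contra hcon
        push_neg at hcon
        obtain ⟨⟨m₁, hm₁k, hm₁⟩, m₂, hm₂k, hm₂⟩ := hcon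
        have h1 : 0 < p m₁ := lt_of_le_of_ne (hp0 m₁) (Ne.symm hm₁)
        have h2 : 0 < p m₂ := lt_of_le_of_ne (hp0 m₂) (Ne.symm hm₂)
        have := hint m₁ k m₂ hm₁k hm₂k h1 h2
        rw [hk0] at this; exact lt_irrefl 0 this
      refine top_le_iff.mpr ?_
      rw [EReal.eq_top_iff_forall_lt]
      intro y
      set n : ℝ := max y 0 + 1 with hn
      have hn0 : 0 < n := by have := le_max_right y 0; rw [hn]; linarith
      have hyn : y < n := by have := le_max_left y 0; rw [hn]; linarith
      rcases hside with hside | hside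
      · -- everything at or left of k vanishes; use slope -n through (k+1, 0)
        set c : ℝ × ℝ := (-n, n * ((k : ℝ) + 1)) with hc
        have hadm : ∀ m : ℤ, ((c.1 * (m : ℝ) + c.2 : ℝ) : EReal) ≤ negLogE (p m) := by
          intro m
          apply coe_le_negLogE
          intro hm
          have hmk : k + 1 ≤ m := by
            by_contra hcon
            exact hm (hside m (by omega))
          have hmkR : (k : ℝ) + 1 ≤ (m : ℝ) := by exact_mod_cast hmk
          have : c.1 * (m : ℝ) + c.2 = n * ((k : ℝ) + 1 - m) := by rw [hc]; ring
          rw [this]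
          have h1 : n * ((k : ℝ) + 1 - m) ≤ 0 :=
            mul_nonpos_of_nonneg_of_nonpos hn0.le (by linarith)
          exact le_trans h1 (hLnn m hm)
        have hval : ((c.1 * (k : ℝ) + c.2 : ℝ) : EReal) ≤
            convExt1 (fun m => negLogE (p m)) (k : ℝ) := le_iSup₂_of_le c hadm le_rfl
        refine lt_of_lt_of_le ?_ hval
        apply EReal.coe_lt_coe_iff.mpr
        have : c.1 * (k : ℝ) + c.2 = n := by rw [hc]; ring
        rw [this]; exact hyn
      · -- everything at or right of k vanishes; use slope n through (k-1, 0)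
        set c : ℝ × ℝ := (n, -(n * ((k : ℝ) - 1))) with hc
        have hadm : ∀ m : ℤ, ((c.1 * (m : ℝ) + c.2 : ℝ) : EReal) ≤ negLogE (p m) := by
          intro m
          apply coe_le_negLogE
          intro hm
          have hmk : m ≤ k - 1 := by
            by_contra hcon
            exact hm (hside m (by omega))
          have hmkR : (m : ℝ) ≤ (k : ℝ) - 1 := by exact_mod_cast hmk
          have : c.1 * (m : ℝ) + c.2 = n * ((m : ℝ) - ((k : ℝ) - 1)) := by rw [hc]; ring
          rw [this]
          have h1 : n * ((m : ℝ) - ((k : ℝ) - 1)) ≤ 0 :=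
            mul_nonpos_of_nonneg_of_nonpos hn0.le (by linarith)
          exact le_trans h1 (hLnn m hm)
        have hval : ((c.1 * (k : ℝ) + c.2 : ℝ) : EReal) ≤
            convExt1 (fun m => negLogE (p m)) (k : ℝ) := le_iSup₂_of_le c hadm le_rfl
        refine lt_of_lt_of_le ?_ hval
        apply EReal.coe_lt_coe_iff.mpr
        have : c.1 * (k : ℝ) + c.2 = n := by rw [hc]; ring
        rw [this]; exact hyn
    · -- p k > 0 : build an exact supporting line
      have hLk : negLogE (p k) = ((-Real.log (p k) : ℝ) : EReal) := if_neg hk.ne'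
      set s : ℝ :=
        if 0 < p (k + 1) then (-Real.log (p (k + 1))) - (-Real.log (p k))
        else if 0 < p (k - 1) then (-Real.log (p k)) - (-Real.log (p (k - 1))) else 0 with hs
      have hsl : 0 < p (k - 1) →
          (-Real.log (p k)) - (-Real.log (p (k - 1))) ≤ s := by
        intro h1
        by_cases h2 : 0 < p (k + 1)
        · rw [hs, if_pos h2]
          have := step_ineq p hlc k h1 hk h2
          linarith
        · rw [hs, if_neg h2, if_pos h1]
      have hsr : 0 < p (k + 1) →
          s ≤ (-Real.log (p (k + 1))) - (-Real.log (p k)) := by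
        intro h1
        rw [hs, if_pos h1]
      have key := affine_below p hint hlc k hk s hsl hsr
      set c : ℝ × ℝ := (s, (-Real.log (p k)) - s * k) with hc
      have hadm : ∀ m : ℤ, ((c.1 * (m : ℝ) + c.2 : ℝ) : EReal) ≤ negLogE (p m) := by
        intro m
        apply coe_le_negLogE
        intro hm
        have hpm : 0 < p m := lt_of_le_of_ne (hp0 m) (Ne.symm hm)
        have := key m hpm
        simp only [hc]
        linarith [this]
      rw [hLk]
      refine le_trans (le_of_eq ?_) (le_iSup₂_of_le c hadm le_rfl)
      congr 1
      simp only [hc]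
      ring
  · intro h
    have hub : ∀ m : ℤ, convExt1 (fun m => negLogE (p m)) (m : ℝ) ≤ negLogE (p m) :=
      fun m => convExt1_le_int _ m
    have hintP : ∀ a b c : ℤ, a ≤ b → b ≤ c → 0 < p a → 0 < p c → 0 < p b := by
      intro a b c hab hbc hpa hpc
      rcases eq_or_lt_of_le (hp0 b) with hb | hb
      · exfalso
        have hbtop : negLogE (p b) = ⊤ := if_pos hb.symm
        have hB := h b
        rw [hbtop] at hB
        have hbound : convExt1 (fun m => negLogE (p m)) (b : ℝ) ≤
            ((max (-Real.log (p a)) (-Real.log (p c)) : ℝ) : EReal) := by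
          apply iSup₂_le
          intro d hd
          have hda : (↑(d.1 * (a : ℝ) + d.2) : EReal) ≤ negLogE (p a) := hd a
          have hdc : (↑(d.1 * (c : ℝ) + d.2) : EReal) ≤ negLogE (p c) := hd c
          rw [negLogE_of_ne hpa.ne'] at hda
          rw [negLogE_of_ne hpc.ne'] at hdc
          have hda' := EReal.coe_le_coe_iff.mp hda
          have hdc' := EReal.coe_le_coe_iff.mp hdc
          apply EReal.coe_le_coe_iff.mpr
          have hacR : (a : ℝ) ≤ b := by exact_mod_cast hab
          have hcbR : (b : ℝ) ≤ c := by exact_mod_cast hbc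
          rcases le_total d.1 0 with hd1 | hd1
          · have : d.1 * (b : ℝ) ≤ d.1 * a := mul_le_mul_of_nonpos_left hacR hd1
            calc d.1 * (b : ℝ) + d.2 ≤ d.1 * a + d.2 := by linarith
              _ ≤ -Real.log (p a) := hda'
              _ ≤ _ := le_max_left _ _
          · have : d.1 * (b : ℝ) ≤ d.1 * c := mul_le_mul_of_nonneg_left hcbR hd1
            calc d.1 * (b : ℝ) + d.2 ≤ d.1 * c + d.2 := by linarith
              _ ≤ -Real.log (p c) := hdc'
              _ ≤ _ := le_max_right _ _
        rw [hB] at hbound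
        exact absurd hbound (by simp)
      · exact hb
    refine ⟨hintP, ?_⟩
    intro k
    rcases eq_or_lt_of_le (hp0 (k - 1)) with h1 | h1
    · rw [← h1]; simpa using sq_nonneg (p k)
    rcases eq_or_lt_of_le (hp0 (k + 1)) with h3 | h3
    · rw [← h3]; simpa using sq_nonneg (p k)
    have h2 : 0 < p k := hintP (k - 1) k (k + 1) (by omega) (by omega) h1 h3
    -- extract the convexity inequality from the sup
    have hmain : 2 * (-Real.log (p k)) ≤ (-Real.log (p (k - 1))) + (-Real.log (p (k + 1))) := by
      by_contra hcon
      push_neg at hcon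
      set ε : ℝ := (2 * (-Real.log (p k)) - ((-Real.log (p (k - 1))) + (-Real.log (p (k + 1))))) / 2
        with hε
      have hεpos : 0 < ε := by rw [hε]; linarith
      have hlt : ((-Real.log (p k) - ε : ℝ) : EReal) < convExt1 (fun m => negLogE (p m)) (k : ℝ) := by
        rw [h k, negLogE_of_ne h2.ne']
        exact_mod_cast (by linarith : -Real.log (p k) - ε < -Real.log (p k))
      simp only [convExt1] at hlt
      rw [lt_iSup_iff] at hlt
      obtain ⟨d, hd⟩ := hlt
      rw [lt_iSup_iff] at hd
      obtain ⟨hadm, hd⟩ := hd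
      have hdval : -Real.log (p k) - ε < d.1 * (k : ℝ) + d.2 := EReal.coe_lt_coe_iff.mp hd
      have hda : d.1 * ((k : ℤ) - 1 : ℤ) + d.2 ≤ -Real.log (p (k - 1)) := by
        have := hadm (k - 1)
        rw [negLogE_of_ne h1.ne'] at this
        exact EReal.coe_le_coe_iff.mp this
      have hdc : d.1 * ((k : ℤ) + 1 : ℤ) + d.2 ≤ -Real.log (p (k + 1)) := by
        have := hadm (k + 1)
        rw [negLogE_of_ne h3.ne'] at this
        exact EReal.coe_le_coe_iff.mp this
      push_cast at hda hdc
      rw [hε] at hdval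
      linarith
    -- turn it back into the product inequality
    have hloglog : Real.log (p (k - 1) * p (k + 1)) ≤ Real.log (p k ^ 2) := by
      rw [Real.log_mul h1.ne' h3.ne', Real.log_pow]
      push_cast
      linarith
    exact (Real.log_le_log_iff (by positivity) (by positivity)).mp hloglog
end

section
/- Let g_1,…,g_n : ℤ → [0,+∞] be functions, none identically +∞, and define g : ℤ^n → [0,+∞] by g(k_1,…,k_n) = Σ_i g_i(k_i). Then the convex extension satisfies g̃(x_1,…,x_n) = Σ_i g̃_i(x_i) for all x ∈ ℝ^n. -/
/-- The convex extension of `g : ℤⁿ → (-∞,+∞]`: the supremum of all affine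
functions on `ℝⁿ` lying below `g` on the lattice points. -/
noncomputable def convExtN {n : ℕ} (g : (Fin n → ℤ) → EReal) (x : Fin n → ℝ) : EReal :=
  ⨆ (c : (Fin n → ℝ) × ℝ)
    (_ : ∀ k : Fin n → ℤ, (((∑ i, c.1 i * (k i : ℝ)) + c.2 : ℝ) : EReal) ≤ g k),
    (((∑ i, c.1 i * x i) + c.2 : ℝ) : EReal)

theorem Finset.sum_insert_apply_update {ι κ M : Type*} [DecidableEq ι] [AddCommMonoid M]
    {s : Finset ι} {a : ι} (ha : a ∉ s) (f : ι → κ → M) (σ : ι → κ) (j : κ) :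
    ∑ i ∈ insert a s, f i (Function.update σ a j i) = f a j + ∑ i ∈ s, f i (σ i) := by
  rw [Finset.sum_insert ha, Function.update_self]
  congr 1
  exact Finset.sum_congr rfl fun i hi => by rw [Function.update_of_ne (ne_of_mem_of_not_mem hi ha)]

namespace EReal

variable {ι κ : Type*}

@[simp, norm_cast]
theorem coe_finset_sum (s : Finset ι) (f : ι → ℝ) :
    ((∑ i ∈ s, f i : ℝ) : EReal) = ∑ i ∈ s, (f i : EReal) :=
  map_sum (⟨⟨Real.toEReal, coe_zero⟩, coe_add⟩ : ℝ →+ EReal) f s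

theorem sum_sub_coe (s : Finset ι) (f : ι → EReal) (r : ι → ℝ) :
    ∑ i ∈ s, (f i - (r i : EReal)) = ∑ i ∈ s, f i - ((∑ i ∈ s, r i : ℝ) : EReal) := by
  simp only [sub_eq_add_neg, ← coe_neg, Finset.sum_add_distrib, ← coe_finset_sum,
    Finset.sum_neg_distrib]

theorem sum_ne_top {s : Finset ι} {f : ι → EReal} (h : ∀ i ∈ s, f i ≠ ⊤) :
    ∑ i ∈ s, f i ≠ ⊤ := by
  classical
  induction s using Finset.induction_on with
  | empty => simp
  | insert a s ha ih =>
    rw [Finset.sum_insert ha]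
    exact add_ne_top (h a (Finset.mem_insert_self a s))
      (ih fun i hi => h i (Finset.mem_insert_of_mem hi))

theorem sum_eq_bot_of_mem {s : Finset ι} {f : ι → EReal} {i : ι} (hi : i ∈ s) (hf : f i = ⊥) :
    ∑ i ∈ s, f i = ⊥ := by
  classical
  rw [← Finset.add_sum_erase s f hi, hf, bot_add]

theorem sum_iSup_le_iSup_sum [Nonempty κ] (s : Finset ι) (f : ι → κ → EReal) :
    ∑ i ∈ s, ⨆ j, f i j ≤ ⨆ σ : ι → κ, ∑ i ∈ s, f i (σ i) := by
  classical
  induction s using Finset.induction_on with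
  | empty => simp
  | insert a s ha ih =>
    rw [Finset.sum_insert ha]
    refine add_le_of_forall_lt fun p hp q hq => ?_
    obtain ⟨j, hj⟩ := lt_iSup_iff.1 hp
    obtain ⟨σ, hσ⟩ := lt_iSup_iff.1 (hq.trans_le ih)
    calc p + q ≤ f a j + ∑ i ∈ s, f i (σ i) := add_le_add hj.le hσ.le
      _ = ∑ i ∈ insert a s, f i (Function.update σ a j i) :=
        (Finset.sum_insert_apply_update ha f σ j).symm
      _ ≤ _ := le_iSup (fun σ : ι → κ => ∑ i ∈ insert a s, f i (σ i)) _

theorem iInf_sum_le_sum_iInf [Nonempty κ] (s : Finset ι) (f : ι → κ → EReal)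
    (hf : ∀ i ∈ s, ⨅ j, f i j ≠ ⊤) :
    ⨅ σ : ι → κ, ∑ i ∈ s, f i (σ i) ≤ ∑ i ∈ s, ⨅ j, f i j := by
  classical
  induction s using Finset.induction_on with
  | empty => simp
  | insert a s ha ih =>
    have hs : ∀ i ∈ s, ⨅ j, f i j ≠ ⊤ := fun i hi => hf i (Finset.mem_insert_of_mem hi)
    rw [Finset.sum_insert ha]
    refine le_add_of_forall_gt (.inr (sum_ne_top hs)) (.inl (hf a (s.mem_insert_self a)))
      fun p hp q hq => ?_
    obtain ⟨j, hj⟩ := iInf_lt_iff.1 hp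
    obtain ⟨σ, hσ⟩ := iInf_lt_iff.1 ((ih hs).trans_lt hq)
    calc ⨅ σ : ι → κ, ∑ i ∈ insert a s, f i (σ i)
        ≤ ∑ i ∈ insert a s, f i (Function.update σ a j i) := iInf_le _ _
      _ = f a j + ∑ i ∈ s, f i (σ i) := Finset.sum_insert_apply_update ha f σ j
      _ ≤ p + q := add_le_add hj.le hσ.le

end EReal

theorem le_convExt1 {g : ℤ → EReal} {c : ℝ × ℝ}
    (hc : ∀ k : ℤ, ((c.1 * (k : ℝ) + c.2 : ℝ) : EReal) ≤ g k) (x : ℝ) :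
    ((c.1 * x + c.2 : ℝ) : EReal) ≤ convExt1 g x :=
  le_iSup₂_of_le c hc le_rfl

theorem le_convExtN {n : ℕ} {g : (Fin n → ℤ) → EReal} {c : (Fin n → ℝ) × ℝ}
    (hc : ∀ k : Fin n → ℤ, (((∑ i, c.1 i * (k i : ℝ)) + c.2 : ℝ) : EReal) ≤ g k) (x : Fin n → ℝ) :
    (((∑ i, c.1 i * x i) + c.2 : ℝ) : EReal) ≤ convExtN g x :=
  le_iSup₂_of_le c hc le_rfl

theorem coe_mul_add_iInf_sub_le_convExt1 (g : ℤ → EReal) (a x : ℝ) :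
    ((a * x : ℝ) : EReal) + ⨅ k : ℤ, (g k - ((a * k : ℝ) : EReal)) ≤ convExt1 g x := by
  refine EReal.add_le_of_forall_lt fun p hp q hq => ?_
  induction q using EReal.rec with
  | bot => simp
  | top => exact absurd hq not_top_lt
  | coe b =>
    have hadm : ∀ k : ℤ, ((a * k + b : ℝ) : EReal) ≤ g k := fun k => by
      rw [add_comm, EReal.coe_add, ← EReal.le_sub_iff_add_le (.inl (EReal.coe_ne_bot _))
        (.inl (EReal.coe_ne_top _))]
      exact hq.le.trans (iInf_le _ k)
    calc p + b ≤ ((a * x + b : ℝ) : EReal) := by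
          rw [EReal.coe_add]; exact add_le_add_left hp.le _
      _ ≤ convExt1 g x := le_convExt1 (c := (a, b)) hadm x

theorem sum_convExt1_le_convExtN {n : ℕ} (g : Fin n → ℤ → EReal) (x : Fin n → ℝ) :
    ∑ i, convExt1 (g i) (x i) ≤ convExtN (fun k : Fin n → ℤ => ∑ i, g i (k i)) x := by
  refine (EReal.sum_iSup_le_iSup_sum _ _).trans (iSup_le fun σ => ?_)
  by_cases hσ : ∀ i, ∀ k : ℤ, (((σ i).1 * (k : ℝ) + (σ i).2 : ℝ) : EReal) ≤ g i k
  · have hadm : ∀ k : Fin n → ℤ, (((∑ i, (σ i).1 * (k i : ℝ)) + ∑ i, (σ i).2 : ℝ) : EReal) ≤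
        ∑ i, g i (k i) := fun k => by
      rw [← Finset.sum_add_distrib, EReal.coe_finset_sum]
      exact Finset.sum_le_sum fun i _ => hσ i (k i)
    simp only [hσ, forall_const, iSup_pos, ← EReal.coe_finset_sum]
    simpa only [Finset.sum_add_distrib] using
      le_convExtN (c := (fun i => (σ i).1, ∑ i, (σ i).2)) hadm x
  · obtain ⟨i, hi⟩ := not_forall.1 hσ
    rw [EReal.sum_eq_bot_of_mem (Finset.mem_univ i) (iSup_neg hi)]
    exact bot_le

theorem convExtN_sum_le_sum_convExt1 {n : ℕ} (g : Fin n → ℤ → EReal)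
    (hg : ∀ i, ∃ k, g i k ≠ ⊤) (x : Fin n → ℝ) :
    convExtN (fun k : Fin n → ℤ => ∑ i, g i (k i)) x ≤ ∑ i, convExt1 (g i) (x i) := by
  refine iSup₂_le fun c hc => ?_
  set m : Fin n → EReal := fun i => ⨅ k : ℤ, (g i k - ((c.1 i * k : ℝ) : EReal))
  have hm_ne_top : ∀ i, m i ≠ ⊤ := fun i => by
    obtain ⟨k, hk⟩ := hg i
    refine ne_top_of_le_ne_top ?_ (iInf_le _ k)
    rw [sub_eq_add_neg, ← EReal.coe_neg]
    exact EReal.add_ne_top hk (EReal.coe_ne_top _)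
  have hd : (c.2 : EReal) ≤ ∑ i, m i := by
    refine le_trans (le_iInf fun k => ?_)
      (EReal.iInf_sum_le_sum_iInf _ _ fun i _ => hm_ne_top i)
    rw [EReal.sum_sub_coe, EReal.le_sub_iff_add_le (.inl (EReal.coe_ne_bot _))
      (.inl (EReal.coe_ne_top _)), ← EReal.coe_add, add_comm]
    exact hc k
  calc (((∑ i, c.1 i * x i) + c.2 : ℝ) : EReal) = ∑ i, ((c.1 i * x i : ℝ) : EReal) + c.2 := by
        push_cast; rfl
    _ ≤ ∑ i, (((c.1 i * x i : ℝ) : EReal) + m i) := by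
        rw [Finset.sum_add_distrib]; exact add_le_add le_rfl hd
    _ ≤ ∑ i, convExt1 (g i) (x i) :=
        Finset.sum_le_sum fun i _ => coe_mul_add_iInf_sub_le_convExt1 _ _ _

theorem convExt_sum_general {n : ℕ} (g : Fin n → ℤ → EReal)
    (hgfin : ∀ i, ∃ k, g i k ≠ ⊤) :
    ∀ x : Fin n → ℝ,
      convExtN (fun k : Fin n → ℤ => ∑ i, g i (k i)) x = ∑ i, convExt1 (g i) (x i) :=
  fun x => le_antisymm (convExtN_sum_le_sum_convExt1 g hgfin x) (sum_convExt1_le_convExtN g x)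

/-- Separability of the convex extension: if `g(k₁,…,kₙ) = Σᵢ gᵢ(kᵢ)` with each
`gᵢ : ℤ → [0,+∞]` not identically `+∞`, then `g̃(x) = Σᵢ g̃ᵢ(xᵢ)`. -/
theorem convExt_sum {n : ℕ} (g : Fin n → ℤ → EReal)
    (hg0 : ∀ i k, 0 ≤ g i k) (hgfin : ∀ i, ∃ k, g i k ≠ ⊤) :
    ∀ x : Fin n → ℝ,
      convExtN (fun k : Fin n → ℤ => ∑ i, g i (k i)) x = ∑ i, convExt1 (g i) (x i) :=
  convExt_sum_general g hgfin
end

section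
/- Let X be a discrete log-concave random vector in ℤ^n with p.m.f. p and log-concave extension f = e^{-g̃}. If f is integrable on ℝ^n, then for every q ≥ 1 the q-th moment E[(Λ_X^*)^q] = Σ_{k∈ℤ^n} (Λ_X^*(k))^q p(k) is finite. -/
open MeasureTheory
open scoped ENNReal

/-- The log-concave extension `f = e^{-g̃}` of a mass function `p = e^{-g}` on `ℤⁿ`. -/
noncomputable def logConcaveExt {n : ℕ} (p : (Fin n → ℤ) → ℝ) (x : Fin n → ℝ) : ℝ :=
  if convExtN (fun k => negLogE (p k)) x = ⊤ then 0
  else Real.exp (-(convExtN (fun k => negLogE (p k)) x).toReal)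

/-- The moment generating function of a mass function `p` on `ℤⁿ`, valued in `[0,∞]`. -/
noncomputable def mgfE {n : ℕ} (p : (Fin n → ℤ) → ℝ) (ξ : Fin n → ℝ) : ℝ≥0∞ :=
  ∑' m : Fin n → ℤ, ENNReal.ofReal (p m * Real.exp (∑ i, (m i : ℝ) * ξ i))

/-- The Cramér transform `Λ*` of a mass function `p` on `ℤⁿ`. -/
noncomputable def cramerE {n : ℕ} (p : (Fin n → ℤ) → ℝ) (x : Fin n → ℝ) : EReal :=
  ⨆ ξ : Fin n → ℝ, (((∑ i, x i * ξ i : ℝ) : EReal) - ENNReal.log (mgfE p ξ))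

/-- `EReal → ℝ≥0∞`, sending `⊤` to `⊤` and negative values to `0`. -/
noncomputable def ERealToENNReal (x : EReal) : ℝ≥0∞ :=
  if x = ⊤ then ⊤ else ENNReal.ofReal x.toReal

/-! Write `V = -log p` on the support of `p`. Fix finitely many support points `z`, one in each
parity class of the support. For a support point `w`, the partner `z` of its parity gives a
lattice midpoint `m = (w + z) / 2`, about half as far out as `w`, and log-concavity gives
`V w ≥ 2 V m - V z`. Since `V → ∞` along the cofinite filter, induction on `j` shows that `V`
exceeds `G + 2ʲ` beyond radius `≈ 2ʲ`: `V` grows linearly and `p` decays exponentially.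
Finally `Λ*(k) ≤ -log p(k)` and `t (-log t)^q ≤ (2q)^q √t`, so the moment series is dominated
by the convergent series `∑ₖ e^{C/2 - B|k|₁/2}`. -/

open Real Filter Finset Topology

section Doubling

variable {α : Type*} {s : Set α} {N V : α → ℝ} {r R G : ℝ}

/-- The doubling argument: `step` supplies, for each `w`, a reference point `z` of bounded size
and potential and a point `m` about half as large as `w` along which `V` is midpoint convex. -/
theorem add_two_pow_le_of_doubling (base : ∀ w ∈ s, r ≤ N w → G + 1 ≤ V w)
    (step : ∀ w ∈ s, ∃ z ∈ s, ∃ m ∈ s,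
      N z ≤ R ∧ V z ≤ G ∧ N w ≤ 2 * N m + N z ∧ 2 * V m ≤ V w + V z) (j : ℕ) :
    ∀ w ∈ s, 2 ^ j * (r + R) - R ≤ N w → G + 2 ^ j ≤ V w := by
  induction j with
  | zero => simpa using base
  | succ j ih =>
    intro w hw hNw
    obtain ⟨z, -, m, hm, hNz, hVz, hN, hV⟩ := step w hw
    have hVm := ih m hm (by rw [pow_succ] at hNw; linarith)
    rw [pow_succ]
    linarith

theorem inv_mul_le_of_doubling (hr : 0 < r) (hR : 0 ≤ R) (hG : 0 ≤ G)
    (base : ∀ w ∈ s, r ≤ N w → G + 1 ≤ V w)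
    (step : ∀ w ∈ s, ∃ z ∈ s, ∃ m ∈ s,
      N z ≤ R ∧ V z ≤ G ∧ N w ≤ 2 * N m + N z ∧ 2 * V m ≤ V w + V z)
    {w : α} (hw : w ∈ s) (hrw : r ≤ N w) : (2 * (r + R))⁻¹ * N w ≤ V w := by
  have hrR : 0 < r + R := by linarith
  obtain ⟨j, hj, hj'⟩ := exists_nat_pow_near (x := (N w + R) / (r + R))
    (by rw [le_div_iff₀ hrR]; linarith) one_lt_two
  rw [le_div_iff₀ hrR] at hj
  rw [div_lt_iff₀ hrR, pow_succ] at hj'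
  have hV := add_two_pow_le_of_doubling base step j w hw (by linarith)
  rw [inv_mul_le_iff₀ (by positivity)]
  nlinarith

end Doubling

section Lattice

variable {n : ℕ}

theorem cast_apply_add_eq_two_mul {w z m : Fin n → ℤ} (h : w + z = 2 • m) (i : Fin n) :
    (w i : ℝ) + z i = 2 * m i := by
  have hi := congrFun h i
  simp only [Pi.add_apply, Pi.smul_apply, nsmul_eq_mul, Nat.cast_ofNat] at hi
  exact_mod_cast hi

theorem convExtN_le_of_two_mul_eq {g : (Fin n → ℤ) → EReal} {w z : Fin n → ℤ}
    {x : Fin n → ℝ} (hx : ∀ i, 2 * x i = w i + z i) {a b : ℝ}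
    (ha : g w ≤ a) (hb : g z ≤ b) : convExtN g x ≤ ((a + b) / 2 : ℝ) := by
  refine iSup₂_le fun c hc => ?_
  have hsum : ∑ i, c.1 i * x i = ((∑ i, c.1 i * (w i : ℝ)) + ∑ i, c.1 i * (z i : ℝ)) / 2 := by
    rw [← sum_add_distrib, sum_div]
    exact sum_congr rfl fun i _ => by linear_combination c.1 i / 2 * hx i
  have hw : (∑ i, c.1 i * (w i : ℝ)) + c.2 ≤ a := EReal.coe_le_coe_iff.mp ((hc w).trans ha)
  have hz : (∑ i, c.1 i * (z i : ℝ)) + c.2 ≤ b := EReal.coe_le_coe_iff.mp ((hc z).trans hb)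
  exact EReal.coe_le_coe_iff.mpr (by rw [hsum]; linarith)

theorem negLogE_of_ne_zero {t : ℝ} (ht : t ≠ 0) : negLogE t = ((-log t : ℝ) : EReal) :=
  if_neg ht

theorem mul_le_sq_of_convExtN_eq {p : (Fin n → ℤ) → ℝ} (hp0 : ∀ k, 0 ≤ p k) {w z m : Fin n → ℤ}
    (hm : convExtN (fun k => negLogE (p k)) (fun i => (m i : ℝ)) = negLogE (p m))
    (hwz : w + z = 2 • m) : p w * p z ≤ p m ^ 2 := by
  rcases (hp0 w).eq_or_lt with hw | hw
  · rw [← hw, zero_mul]; positivity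
  rcases (hp0 z).eq_or_lt with hz | hz
  · rw [← hz, mul_zero]; positivity
  have hmid : ∀ i, 2 * (m i : ℝ) = w i + z i := fun i => (cast_apply_add_eq_two_mul hwz i).symm
  have hle := convExtN_le_of_two_mul_eq (g := fun k => negLogE (p k)) hmid
    (negLogE_of_ne_zero hw.ne').le (negLogE_of_ne_zero hz.ne').le
  rw [hm] at hle
  have hm0 : p m ≠ 0 := fun h => by simp [negLogE, h] at hle
  rw [negLogE_of_ne_zero hm0, EReal.coe_le_coe_iff] at hle
  calc p w * p z = exp (log (p w) + log (p z)) := by rw [exp_add, exp_log hw, exp_log hz]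
    _ ≤ exp (2 * log (p m)) := exp_le_exp.mpr (by linarith)
    _ = p m ^ 2 := by rw [two_mul, exp_add, exp_log ((hp0 m).lt_of_ne' hm0), sq]

def intL1Norm (k : Fin n → ℤ) : ℝ := ∑ i, |(k i : ℝ)|

theorem intL1Norm_nonneg (k : Fin n → ℤ) : 0 ≤ intL1Norm k :=
  sum_nonneg fun i _ => abs_nonneg (k i : ℝ)

theorem intL1Norm_le_of_add_eq_two_smul {w z m : Fin n → ℤ} (h : w + z = 2 • m) :
    intL1Norm w ≤ 2 * intL1Norm m + intL1Norm z := by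
  rw [intL1Norm, intL1Norm, intL1Norm, mul_sum, ← sum_add_distrib]
  refine sum_le_sum fun i _ => ?_
  rw [show (w i : ℝ) = 2 * m i - z i by linarith [cast_apply_add_eq_two_mul h i]]
  exact (abs_sub _ _).trans_eq (by rw [abs_mul, abs_two])

/-- Whether `w + z ∈ 2ℤⁿ` depends only on the parities of `w` and `z`, of which there are
finitely many. -/
theorem exists_finset_midpoint_partners (s : Set (Fin n → ℤ)) :
    ∃ t : Finset (Fin n → ℤ), ↑t ⊆ s ∧ ∀ w ∈ s, ∃ z ∈ t, ∃ m, w + z = 2 • m := by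
  let parity : (Fin n → ℤ) → Fin n → ZMod 2 := fun k i => k i
  obtain ⟨t, hts, htfin, himage⟩ := Set.exists_subset_image_finite_and
    (p := fun u => parity '' s = u) |>.mp ⟨parity '' s, subset_rfl, Set.toFinite _, rfl⟩
  refine ⟨htfin.toFinset, by simpa using hts, fun w hw => ?_⟩
  obtain ⟨z, hzt, hzw⟩ : parity w ∈ parity '' t := himage ▸ Set.mem_image_of_mem parity hw
  refine ⟨z, htfin.mem_toFinset.mpr hzt, fun i => (w i + z i) / 2, funext fun i => ?_⟩
  have hdvd := (ZMod.intCast_eq_intCast_iff_dvd_sub _ _ 2).mp (congrFun hzw i)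
  simp only [Pi.add_apply, Pi.smul_apply, nsmul_eq_mul, Nat.cast_ofNat]
  push_cast at hdvd
  omega

theorem exists_lt_of_le_intL1Norm {f : (Fin n → ℤ) → ℝ} (hf : Tendsto f cofinite (𝓝 0))
    {ε : ℝ} (hε : 0 < ε) : ∃ r > 0, ∀ k, r ≤ intL1Norm k → f k < ε := by
  obtain ⟨M, hM⟩ := ((eventually_cofinite.mp (hf (Iio_mem_nhds hε))).image intL1Norm).bddAbove
  refine ⟨max M 0 + 1, by positivity, fun k hk => not_le.mp fun hεk => ?_⟩
  have := hM (Set.mem_image_of_mem intL1Norm (show ¬ f k < ε from not_lt.mpr hεk))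
  linarith [le_max_left M 0]

theorem pos_and_two_mul_neg_log_le_of_mul_le_sq {a b c : ℝ} (ha : 0 < a) (hb : 0 < b)
    (hc : 0 ≤ c) (h : a * b ≤ c ^ 2) : 0 < c ∧ 2 * -log c ≤ -log a + -log b := by
  have hcpos : 0 < c := hc.lt_of_ne' fun h0 => by
    rw [h0] at h
    nlinarith [mul_pos ha hb]
  have hlog := log_le_log (mul_pos ha hb) h
  rw [log_mul ha.ne' hb.ne', log_pow] at hlog
  push_cast at hlog
  exact ⟨hcpos, by linarith⟩

theorem exists_exp_decay_of_mul_le_sq {p : (Fin n → ℤ) → ℝ} (hp0 : ∀ k, 0 ≤ p k)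
    (hpsum : HasSum p 1) (hlc : ∀ w z m, w + z = 2 • m → p w * p z ≤ p m ^ 2) :
    ∃ B > 0, ∃ C, ∀ k, p k ≤ exp (C - B * intL1Norm k) := by
  have hp1 : ∀ k, p k ≤ 1 := fun k => le_hasSum hpsum k fun j _ => hp0 j
  have hV0 : ∀ k, 0 ≤ -log (p k) := fun k => neg_nonneg.mpr (log_nonpos (hp0 k) (hp1 k))
  obtain ⟨t, hts, hpartner⟩ := exists_finset_midpoint_partners {k | p k ≠ 0}
  set R := ∑ z ∈ t, intL1Norm z
  set G := ∑ z ∈ t, -log (p z)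
  have hR : 0 ≤ R := sum_nonneg fun z _ => intL1Norm_nonneg z
  have hG : 0 ≤ G := sum_nonneg fun z _ => hV0 z
  obtain ⟨r, hr, htail⟩ :=
    exists_lt_of_le_intL1Norm hpsum.summable.tendsto_cofinite_zero (exp_pos (-(G + 1)))
  have base : ∀ w ∈ {k | p k ≠ 0}, r ≤ intL1Norm w → G + 1 ≤ -log (p w) := by
    intro w hw hrw
    have := log_lt_log ((hp0 w).lt_of_ne' hw) (htail w hrw)
    rw [log_exp] at this
    linarith
  have step : ∀ w ∈ {k | p k ≠ 0}, ∃ z ∈ {k | p k ≠ 0}, ∃ m ∈ {k | p k ≠ 0},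
      intL1Norm z ≤ R ∧ -log (p z) ≤ G ∧ intL1Norm w ≤ 2 * intL1Norm m + intL1Norm z ∧
      2 * -log (p m) ≤ -log (p w) + -log (p z) := by
    intro w hw
    obtain ⟨z, hzt, m, hwz⟩ := hpartner w hw
    obtain ⟨hpm, hconv⟩ := pos_and_two_mul_neg_log_le_of_mul_le_sq ((hp0 w).lt_of_ne' hw)
      ((hp0 z).lt_of_ne' (hts hzt)) (hp0 m) (hlc w z m hwz)
    exact ⟨z, hts hzt, m, hpm.ne', single_le_sum (fun k _ => intL1Norm_nonneg k) hzt,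
      single_le_sum (fun k _ => hV0 k) hzt, intL1Norm_le_of_add_eq_two_smul hwz, hconv⟩
  have hB : 0 < (2 * (r + R))⁻¹ := by positivity
  refine ⟨(2 * (r + R))⁻¹, hB, (2 * (r + R))⁻¹ * r, fun k => ?_⟩
  rcases (hp0 k).eq_or_lt with hk | hk
  · rw [← hk]
    exact (exp_pos _).le
  rcases lt_or_ge (intL1Norm k) r with hkr | hkr
  · calc p k ≤ 1 := hp1 k
      _ ≤ _ := one_le_exp (sub_nonneg.mpr (mul_le_mul_of_nonneg_left hkr.le hB.le))
  · have hV := inv_mul_le_of_doubling hr hR hG base step hk.ne' hkr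
    calc p k = exp (log (p k)) := (exp_log hk).symm
      _ ≤ _ := exp_le_exp.mpr (by linarith [mul_pos hB hr])

end Lattice

section Moments

theorem rpow_le_mul_exp {q c L : ℝ} (hq : 0 < q) (hc : 0 < c) (hL : 0 ≤ L) :
    L ^ q ≤ (q / c) ^ q * exp (c * L) := by
  have hle : c * L / q ≤ exp (c * L / q) := by linarith [add_one_le_exp (c * L / q)]
  calc L ^ q = (q / c * (c * L / q)) ^ q := by field_simp
    _ = (q / c) ^ q * (c * L / q) ^ q := mul_rpow (by positivity) (by positivity)
    _ ≤ (q / c) ^ q * exp (c * L / q) ^ q := by gcongr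
    _ = (q / c) ^ q * exp (c * L) := by rw [← exp_mul, div_mul_cancel₀ _ hq.ne']

theorem mul_neg_log_rpow_le {t q : ℝ} (ht0 : 0 ≤ t) (ht1 : t ≤ 1) (hq : 0 < q) :
    t * (-log t) ^ q ≤ (2 * q) ^ q * √t := by
  rcases ht0.eq_or_lt with rfl | ht
  · simp
  have hL : 0 ≤ -log t := neg_nonneg.mpr (log_nonpos ht0 ht1)
  have hsqrt : t * exp (1 / 2 * -log t) = √t := by
    nth_rewrite 1 [← exp_log ht]
    rw [← exp_add, ← exp_log ht, ← exp_half, log_exp]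
    ring_nf
  calc t * (-log t) ^ q ≤ t * ((q / (1 / 2)) ^ q * exp (1 / 2 * -log t)) := by
        gcongr
        exact rpow_le_mul_exp hq one_half_pos hL
    _ = (2 * q) ^ q * √t := by rw [← hsqrt, show q / (1 / 2) = 2 * q by ring]; ring

variable {n : ℕ} {p : (Fin n → ℤ) → ℝ}

theorem cramerE_le_neg_log {k : Fin n → ℤ} (hk : 0 < p k) :
    cramerE p (fun i => (k i : ℝ)) ≤ ((-log (p k) : ℝ) : EReal) := by
  refine iSup_le fun ξ => ?_
  set s : ℝ := ∑ i, (k i : ℝ) * ξ i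
  have hpos : 0 < p k * exp s := by positivity
  have hlog : ((log (p k * exp s) : ℝ) : EReal) ≤ ENNReal.log (mgfE p ξ) := by
    rw [← ENNReal.log_ofReal_of_pos hpos]
    exact ENNReal.log_monotone (ENNReal.le_tsum k)
  calc (s : EReal) - ENNReal.log (mgfE p ξ) ≤ (s : EReal) - ((log (p k * exp s) : ℝ) : EReal) :=
        EReal.sub_le_sub le_rfl hlog
    _ = ((-log (p k) : ℝ) : EReal) := by
        rw [← EReal.coe_sub, log_mul hk.ne' (exp_ne_zero s), log_exp]
        ring_nf

theorem ERealToENNReal_le_ofReal {x : EReal} {r : ℝ} (h : x ≤ r) :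
    ERealToENNReal x ≤ ENNReal.ofReal r := by
  have hx : x ≠ ⊤ := ne_top_of_le_ne_top (EReal.coe_ne_top r) h
  rw [ERealToENNReal, if_neg hx]
  rcases eq_or_ne x ⊥ with rfl | hbot
  · simp
  · exact ENNReal.ofReal_le_ofReal (EReal.toReal_le_toReal h hbot (EReal.coe_ne_top r))

theorem ofReal_mul_ERealToENNReal_cramerE_rpow_le {k : Fin n → ℤ} (hk0 : 0 ≤ p k)
    (hk1 : p k ≤ 1) {q : ℝ} (hq : 0 ≤ q) :
    ENNReal.ofReal (p k) * ERealToENNReal (cramerE p (fun i => (k i : ℝ))) ^ q ≤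
      ENNReal.ofReal (p k * (-log (p k)) ^ q) := by
  rcases hk0.eq_or_lt with hk | hk
  · simp [← hk]
  have hL : 0 ≤ -log (p k) := neg_nonneg.mpr (log_nonpos hk0 hk1)
  rw [ENNReal.ofReal_mul hk0, ← ENNReal.ofReal_rpow_of_nonneg hL hq]
  gcongr
  exact ERealToENNReal_le_ofReal (cramerE_le_neg_log hk)

end Moments

section Summability

theorem ENNReal.tsum_fin_pi_prod_eq_pow {α : Type*} (c : α → ℝ≥0∞) (n : ℕ) :
    ∑' k : Fin n → α, ∏ i, c (k i) = (∑' a, c a) ^ n := by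
  induction n with
  | zero => simp
  | succ n ih =>
    rw [← (Fin.consEquiv fun _ => α).tsum_eq, ENNReal.tsum_prod', pow_succ']
    simp only [Fin.consEquiv_apply, Fin.prod_univ_succ, Fin.cons_zero, Fin.cons_succ,
      ENNReal.tsum_mul_left, ih, ENNReal.tsum_mul_right]

theorem summable_exp_neg_mul_abs_int {b : ℝ} (hb : 0 < b) :
    Summable fun j : ℤ => exp (-(b * |(j : ℝ)|)) := by
  have hnat : Summable fun m : ℕ => exp (-(b * m)) := by
    simpa [mul_comm] using summable_exp_nat_mul_iff.mpr (neg_neg_of_pos hb)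
  exact .of_nat_of_neg (hnat.congr fun m => by simp) (hnat.congr fun m => by simp)

theorem tsum_ofReal_exp_sub_mul_intL1Norm_ne_top {n : ℕ} (c : ℝ) {b : ℝ} (hb : 0 < b) :
    ∑' k : Fin n → ℤ, ENNReal.ofReal (exp (c - b * intL1Norm k)) ≠ ⊤ := by
  have hprod : ∀ k : Fin n → ℤ, ENNReal.ofReal (exp (c - b * intL1Norm k)) =
      ENNReal.ofReal (exp c) * ∏ i, ENNReal.ofReal (exp (-(b * |(k i : ℝ)|))) := by
    intro k
    rw [← ENNReal.ofReal_prod_of_nonneg fun i _ => (exp_pos _).le,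
      ← ENNReal.ofReal_mul (exp_pos _).le, ← exp_sum, ← exp_add, intL1Norm, mul_sum,
      sum_neg_distrib, sub_eq_add_neg]
  rw [tsum_congr hprod, ENNReal.tsum_mul_left,
    ENNReal.tsum_fin_pi_prod_eq_pow fun j : ℤ => ENNReal.ofReal (exp (-(b * |(j : ℝ)|))),
    ← ENNReal.ofReal_tsum_of_nonneg (fun _ => (exp_pos _).le) (summable_exp_neg_mul_abs_int hb)]
  exact ENNReal.mul_ne_top ENNReal.ofReal_ne_top (ENNReal.pow_ne_top ENNReal.ofReal_ne_top)

end Summability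

theorem cramer_moments_finite_of_integrable_extension_general {n : ℕ}
    (p : (Fin n → ℤ) → ℝ) (hp0 : ∀ k, 0 ≤ p k) (hpsum : HasSum p 1)
    (hext : ∀ k : Fin n → ℤ,
      convExtN (fun m => negLogE (p m)) (fun i => (k i : ℝ)) = negLogE (p k)) :
    ∀ q : ℝ, 1 ≤ q →
      ∑' k : Fin n → ℤ,
        ENNReal.ofReal (p k) * (ERealToENNReal (cramerE p (fun i => (k i : ℝ)))) ^ q ≠ ⊤ := by
  intro q hq
  have hq0 : 0 < q := zero_lt_one.trans_le hq
  have hp1 : ∀ k, p k ≤ 1 := fun k => le_hasSum hpsum k fun j _ => hp0 j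
  obtain ⟨B, hB, C, hdecay⟩ := exists_exp_decay_of_mul_le_sq hp0 hpsum
    fun _ _ m => mul_le_sq_of_convExtN_eq hp0 (hext m)
  have hsum := tsum_ofReal_exp_sub_mul_intL1Norm_ne_top (n := n) (C / 2) (half_pos hB)
  refine ne_top_of_le_ne_top (ENNReal.mul_ne_top (ENNReal.ofReal_ne_top (r := (2 * q) ^ q)) hsum) ?_
  rw [← ENNReal.tsum_mul_left]
  refine ENNReal.tsum_le_tsum fun k => ?_
  have hsqrt : √(p k) ≤ exp (C / 2 - B / 2 * intL1Norm k) := by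
    rw [show C / 2 - B / 2 * intL1Norm k = (C - B * intL1Norm k) / 2 by ring, exp_half]
    exact sqrt_le_sqrt (hdecay k)
  calc _ ≤ ENNReal.ofReal (p k * (-log (p k)) ^ q) :=
        ofReal_mul_ERealToENNReal_cramerE_rpow_le (hp0 k) (hp1 k) hq0.le
    _ ≤ ENNReal.ofReal ((2 * q) ^ q * exp (C / 2 - B / 2 * intL1Norm k)) :=
        ENNReal.ofReal_le_ofReal ((mul_neg_log_rpow_le (hp0 k) (hp1 k) hq0).trans (by gcongr))
    _ = _ := ENNReal.ofReal_mul (by positivity)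

/-- If `X` is a discrete log-concave random vector in `ℤⁿ` with p.m.f. `p`
(so `g = -log p` is convex-extensible) whose log-concave extension
`f = e^{-g̃}` is integrable on `ℝⁿ`, then all moments
`E[(Λ_X^*)^q] = Σ_k (Λ_X^*(k))^q p(k)`, `q ≥ 1`, are finite. -/
theorem cramer_moments_finite_of_integrable_extension {n : ℕ}
    (p : (Fin n → ℤ) → ℝ) (hp0 : ∀ k, 0 ≤ p k) (hpsum : HasSum p 1)
    (hext : ∀ k : Fin n → ℤ,
      convExtN (fun m => negLogE (p m)) (fun i => (k i : ℝ)) = negLogE (p k))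
    (hint : Integrable (logConcaveExt p) (volume : Measure (Fin n → ℝ))) :
    ∀ q : ℝ, 1 ≤ q →
      ∑' k : Fin n → ℤ,
        ENNReal.ofReal (p k) * (ERealToENNReal (cramerE p (fun i => (k i : ℝ)))) ^ q ≠ ⊤ :=
  cramer_moments_finite_of_integrable_extension_general p hp0 hpsum hext
end

section
/- Let Y be a discrete log-concave random variable on ℤ with p.m.f. p, unbounded above, and let r* = lim_{k→∞} p(k+1)/p(k) ∈ [0,1). Then the survival probabilities S(k) = P(Y ≥ k) satisfy p(k)/(1-r*) ≤ S(k) ≤ p(k)/(1 - p(k+1)/p(k)) for all k in the support, and consequently S(k) ~ p(k)/(1-r*) as k → ∞. -/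
open Filter Topology

/-!
On the support, log-concavity says exactly that the ratios `q l = p (l + 1) / p l` are
nonincreasing, so `r ≤ q l ≤ q k` for `l ≥ k`. Summing `r * p l ≤ p (l + 1) ≤ q k * p l` over
`l ≥ k` gives `r * S k ≤ S k - p k ≤ q k * S k`, which are the two bounds. As `q k → r`, they
squeeze `S k * (1 - r) / p k` to `1`.
-/

section TailComparison

variable {f : ℕ → ℝ} {c : ℝ}

theorem tsum_mul_one_sub_le_of_le_mul (hf : Summable f) (h : ∀ n, f (n + 1) ≤ c * f n) :
    (∑' n, f n) * (1 - c) ≤ f 0 := by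
  have hshift : ∑' n, f (n + 1) ≤ c * ∑' n, f n := by
    rw [← tsum_mul_left]
    exact ((summable_nat_add_iff 1).2 hf).tsum_le_tsum h (hf.mul_left c)
  rw [hf.tsum_eq_zero_add] at hshift ⊢
  linarith

theorem le_tsum_mul_one_sub_of_mul_le (hf : Summable f) (h : ∀ n, c * f n ≤ f (n + 1)) :
    f 0 ≤ (∑' n, f n) * (1 - c) := by
  have hshift : c * ∑' n, f n ≤ ∑' n, f (n + 1) := by
    rw [← tsum_mul_left]
    exact (hf.mul_left c).tsum_le_tsum h ((summable_nat_add_iff 1).2 hf)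
  rw [hf.tsum_eq_zero_add] at hshift ⊢
  linarith

end TailComparison

section LogConcave

variable {p : ℤ → ℝ} {k : ℤ}

theorem ratio_antitoneOn_of_logConcave (hlc : ∀ l, p (l - 1) * p (l + 1) ≤ p l ^ 2)
    (hpos : ∀ l ≥ k, 0 < p l) :
    AntitoneOn (fun l => p (l + 1) / p l) (Set.Ici k) := by
  refine antitoneOn_of_add_one_le Set.ordConnected_Ici fun l _ hl _ => ?_
  have hlc' := hlc (l + 1)
  rw [add_sub_cancel_right, add_assoc, one_add_one_eq_two] at hlc'
  rw [add_assoc, one_add_one_eq_two,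
    div_le_div_iff₀ (hpos (l + 1) (le_add_of_le_of_nonneg hl zero_le_one)) (hpos l hl),
    mul_comm, ← sq]
  exact hlc'

theorem summable_tail (hsum : Summable p) (k : ℤ) : Summable fun n : ℕ => p (k + n) :=
  hsum.comp_injective ((add_right_injective k).comp Nat.cast_injective)

theorem tsum_tail_mul_one_sub_ratio_le (hsum : Summable p)
    (hlc : ∀ l, p (l - 1) * p (l + 1) ≤ p l ^ 2) (hpos : ∀ l ≥ k, 0 < p l) :
    (∑' n : ℕ, p (k + n)) * (1 - p (k + 1) / p k) ≤ p k := by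
  have hanti := ratio_antitoneOn_of_logConcave hlc hpos
  have h := tsum_mul_one_sub_le_of_le_mul (summable_tail hsum k) (c := p (k + 1) / p k)
    fun n => ?_
  · simpa using h
  have hn : k ≤ k + n := le_add_of_nonneg_right n.cast_nonneg
  rw [Nat.cast_succ, ← add_assoc, ← div_le_iff₀ (hpos _ hn)]
  exact hanti Set.self_mem_Ici hn hn

theorem div_one_sub_le_tsum_tail {r : ℝ} (hsum : Summable p)
    (hlc : ∀ l, p (l - 1) * p (l + 1) ≤ p l ^ 2) (hpos : ∀ l ≥ k, 0 < p l)
    (hr : Tendsto (fun l => p (l + 1) / p l) atTop (𝓝 r)) (hr1 : r < 1) :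
    p k / (1 - r) ≤ ∑' n : ℕ, p (k + n) := by
  have hanti := ratio_antitoneOn_of_logConcave hlc hpos
  have h := le_tsum_mul_one_sub_of_mul_le (summable_tail hsum k) (c := r) fun n => ?_
  · rw [div_le_iff₀ (sub_pos.2 hr1)]
    simpa using h
  have hn : k ≤ k + n := le_add_of_nonneg_right n.cast_nonneg
  have hrle : r ≤ p (k + n + 1) / p (k + n) :=
    le_of_tendsto hr (eventually_atTop.2 ⟨k + n, fun l hl => hanti hn (hn.trans hl) hl⟩)
  rwa [Nat.cast_succ, ← add_assoc, ← le_div_iff₀ (hpos _ hn)]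

theorem tendsto_tsum_tail_mul_div {r : ℝ} {a : ℤ} (hsum : Summable p)
    (hlc : ∀ l, p (l - 1) * p (l + 1) ≤ p l ^ 2) (hpos : ∀ l ≥ a, 0 < p l)
    (hr : Tendsto (fun l => p (l + 1) / p l) atTop (𝓝 r)) (hr1 : r < 1) :
    Tendsto (fun k => (∑' n : ℕ, p (k + n)) * (1 - r) / p k) atTop (𝓝 1) := by
  have hr1' : 0 < 1 - r := sub_pos.2 hr1
  have hupper : Tendsto (fun k => (1 - r) / (1 - p (k + 1) / p k)) atTop (𝓝 1) := by
    simpa [div_self hr1'.ne', Pi.div_def] using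
      (tendsto_const_nhds (x := 1 - r)).div (tendsto_const_nhds.sub hr) hr1'.ne'
  have hev : ∀ᶠ k in atTop, (∀ l ≥ k, 0 < p l) ∧ p (k + 1) / p k < 1 :=
    (eventually_ge_atTop a).mono (fun k hk l hl => hpos l (hk.trans hl)) |>.and
      (hr.eventually_lt_const hr1)
  refine tendsto_of_tendsto_of_tendsto_of_le_of_le' tendsto_const_nhds hupper ?_ ?_ <;>
    filter_upwards [hev] with k ⟨hposk, hqk⟩
  · rw [le_div_iff₀ (hposk k le_rfl), one_mul, ← div_le_iff₀ hr1']
    exact div_one_sub_le_tsum_tail hsum hlc hposk hr hr1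
  · rw [div_le_div_iff₀ (hposk k le_rfl) (sub_pos.2 hqk), mul_right_comm, mul_comm (1 - r)]
    exact mul_le_mul_of_nonneg_right (tsum_tail_mul_one_sub_ratio_le hsum hlc hposk) hr1'.le

end LogConcave

theorem survival_asymptotics_general (p : ℤ → ℝ)
    (hpsum : HasSum p 1)
    (hsupp : ∀ a b c : ℤ, a ≤ b → b ≤ c → 0 < p a → 0 < p c → 0 < p b)
    (hlc : ∀ k : ℤ, p (k - 1) * p (k + 1) ≤ p k ^ 2)
    (hub : ∀ k : ℤ, ∃ m : ℤ, k ≤ m ∧ 0 < p m)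
    (r : ℝ) (hr1 : r < 1)
    (hr : Tendsto (fun k : ℤ => p (k + 1) / p k) atTop (nhds r)) :
    (∀ k : ℤ, 0 < p k →
        p k / (1 - r) ≤ (∑' m : ℕ, p (k + m)) ∧
        (∑' m : ℕ, p (k + m)) * (1 - p (k + 1) / p k) ≤ p k) ∧
      Tendsto (fun k : ℤ => (∑' m : ℕ, p (k + m)) * (1 - r) / p k) atTop (nhds 1) := by
  have htail : ∀ k, 0 < p k → ∀ l ≥ k, 0 < p l := fun k hk l hl =>
    let ⟨m, hlm, hm⟩ := hub l
    hsupp k l m hl hlm hk hm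
  refine ⟨fun k hk => ⟨div_one_sub_le_tsum_tail hpsum.summable hlc (htail k hk) hr hr1,
    tsum_tail_mul_one_sub_ratio_le hpsum.summable hlc (htail k hk)⟩, ?_⟩
  obtain ⟨a, -, ha⟩ := hub 0
  exact tendsto_tsum_tail_mul_div hpsum.summable hlc (htail a ha) hr hr1

/-- For a discrete log-concave p.m.f. `p` on `ℤ`, unbounded above, with ratio
limit `r* = lim p(k+1)/p(k) ∈ [0,1)`, the survival function `S(k) = P(Y ≥ k)`
satisfies `p(k)/(1-r*) ≤ S(k)` and `S(k) (1 - p(k+1)/p(k)) ≤ p(k)` on the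
support, and `S(k) ~ p(k)/(1-r*)` as `k → ∞`. -/
theorem survival_asymptotics (p : ℤ → ℝ)
    (hp0 : ∀ k, 0 ≤ p k) (hpsum : HasSum p 1)
    (hsupp : ∀ a b c : ℤ, a ≤ b → b ≤ c → 0 < p a → 0 < p c → 0 < p b)
    (hlc : ∀ k : ℤ, p (k - 1) * p (k + 1) ≤ p k ^ 2)
    (hub : ∀ k : ℤ, ∃ m : ℤ, k ≤ m ∧ 0 < p m)
    (r : ℝ) (hr0 : 0 ≤ r) (hr1 : r < 1)
    (hr : Tendsto (fun k : ℤ => p (k + 1) / p k) atTop (nhds r)) :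
    (∀ k : ℤ, 0 < p k →
        p k / (1 - r) ≤ (∑' m : ℕ, p (k + m)) ∧
        (∑' m : ℕ, p (k + m)) * (1 - p (k + 1) / p k) ≤ p k) ∧
      Tendsto (fun k : ℤ => (∑' m : ℕ, p (k + m)) * (1 - r) / p k) atTop (nhds 1) :=
  survival_asymptotics_general p hpsum hsupp hlc hub r hr1 hr
end

section
/- Let μ be an even probability measure on ℤ with discrete log-concave p.m.f. p, unbounded support, and r* = lim_{k→∞} p(k+1)/p(k). Set ξ* = -log r* (with log 0 = -∞). Then the moment generating function φ_μ(ξ) = Σ_k p(k) e^{kξ} is finite exactly for ξ ∈ (-ξ*, ξ*), and Λ_μ(ξ) → +∞ as ξ → ξ*. -/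
open Filter Topology

/-! Log-concavity makes the ratios `p (k + 1) / p k` decrease to `r`, so `p (k + 1) ≥ r * p k`.
On `ℕ`, the terms `p n * x ^ n` have ratios tending to `r * x`: the ratio test gives
convergence when `r * x < 1`, while for `r * x ≥ 1` the terms are nondecreasing and positive.
Evenness turns the negative half of the series over `ℤ` into the positive half at `-ξ`.
At `ξ* = -log r` the series diverges, so some finite partial sum is large there; being
continuous in `ξ`, it stays large just below `ξ*`, where it bounds the convergent series. -/

theorem tendsto_tsum_atTop_of_not_summable {α ι : Type*} [TopologicalSpace α]
    {f : α → ι → ℝ} {l : Filter α} {a : α} (hl : l ≤ 𝓝 a) (hf : ∀ x i, 0 ≤ f x i)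
    (hcont : ∀ i, ContinuousAt (f · i) a) (hsum : ∀ᶠ x in l, Summable (f x))
    (hdiv : ¬Summable (f a)) : Tendsto (fun x => ∑' i, f x i) l atTop := by
  refine tendsto_atTop.2 fun M => ?_
  obtain ⟨s, hs⟩ : ∃ s : Finset ι, M < ∑ i ∈ s, f a i := by
    by_contra! h
    exact hdiv (summable_of_sum_le (hf a) h)
  have hnear : ∀ᶠ x in l, M < ∑ i ∈ s, f x i :=
    hl ((tendsto_finsetSum s fun i _ => (hcont i).tendsto).eventually_const_lt hs)
  filter_upwards [hnear, hsum] with x hx hx_sum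
  exact hx.le.trans (hx_sum.sum_le_tsum s fun i _ => hf x i)

theorem summable_mul_pow_iff_of_ratio {q : ℕ → ℝ} {r x : ℝ} (hq : ∀ n, 0 < q n)
    (hstep : ∀ n, r * q n ≤ q (n + 1))
    (hlim : Tendsto (fun n => q (n + 1) / q n) atTop (𝓝 r)) (hx : 0 < x) :
    Summable (fun n => q n * x ^ n) ↔ r * x < 1 := by
  constructor
  · intro hS
    by_contra! hrx
    have hmono : Monotone (fun n => q n * x ^ n) := by
      refine monotone_nat_of_le_succ fun n => ?_
      have hn : 0 ≤ q n * x ^ n := by have := hq n; positivity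
      calc q n * x ^ n ≤ r * x * (q n * x ^ n) := le_mul_of_one_le_left hn hrx
        _ = r * q n * x ^ (n + 1) := by ring
        _ ≤ q (n + 1) * x ^ (n + 1) := by gcongr; exact hstep n
    have := ge_of_tendsto' hS.tendsto_atTop_zero fun n => hmono n.zero_le
    simp only [pow_zero, mul_one] at this
    exact (hq 0).not_ge this
  · intro hrx
    refine summable_of_ratio_test_tendsto_lt_one hrx
      (Eventually.of_forall fun n => (mul_pos (hq n) (pow_pos hx n)).ne') ?_
    refine (hlim.mul_const x).congr fun n => ?_
    have := hq n
    have := hq (n + 1)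
    rw [Real.norm_of_nonneg (by positivity), Real.norm_of_nonneg (by positivity)]
    field_simp
    ring

theorem mul_exp_lt_one_iff {r y : ℝ} (hr : 0 ≤ r) :
    r * Real.exp y < 1 ↔ r = 0 ∨ y < -Real.log r := by
  rcases hr.eq_or_lt with rfl | hr
  · simp
  · rw [← Real.exp_log hr, ← Real.exp_add, Real.exp_lt_one_iff, Real.exp_log hr]
    simp only [hr.ne', false_or]
    constructor <;> intro <;> linarith

section

variable {p : ℤ → ℝ}

theorem pos_of_even_of_unbounded_support (heven : ∀ k, p (-k) = p k)
    (hsupp : ∀ a b c : ℤ, a ≤ b → b ≤ c → 0 < p a → 0 < p c → 0 < p b)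
    (hub : ∀ k : ℤ, ∃ m : ℤ, k ≤ m ∧ 0 < p m) (k : ℤ) : 0 < p k := by
  obtain ⟨m, hm, hpm⟩ := hub |k|
  exact hsupp (-m) k m (by linarith [neg_abs_le k]) (by linarith [le_abs_self k])
    (heven m ▸ hpm) hpm

theorem antitone_ratio_of_logConcave (hpos : ∀ k, 0 < p k)
    (hlc : ∀ k : ℤ, p (k - 1) * p (k + 1) ≤ p k ^ 2) :
    Antitone (fun k => p (k + 1) / p k) := by
  refine antitone_int_of_succ_le fun k => ?_
  have h := hlc (k + 1)
  rw [add_sub_cancel_right] at h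
  rw [div_le_div_iff₀ (hpos _) (hpos _)]
  linarith

theorem mul_le_succ_of_tendsto_ratio (hpos : ∀ k, 0 < p k)
    (hlc : ∀ k : ℤ, p (k - 1) * p (k + 1) ≤ p k ^ 2) {r : ℝ}
    (hr : Tendsto (fun k => p (k + 1) / p k) atTop (𝓝 r)) (k : ℤ) : r * p k ≤ p (k + 1) := by
  have := le_of_tendsto hr (eventually_atTop.2 ⟨k, fun j hj =>
    antitone_ratio_of_logConcave hpos hlc hj⟩)
  rwa [le_div_iff₀ (hpos k)] at this

theorem summable_mgf_iff (hpos : ∀ k, 0 < p k) (heven : ∀ k, p (-k) = p k)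
    (hlc : ∀ k : ℤ, p (k - 1) * p (k + 1) ≤ p k ^ 2) {r : ℝ}
    (hr : Tendsto (fun k => p (k + 1) / p k) atTop (𝓝 r)) (ξ : ℝ) :
    Summable (fun k : ℤ => p k * Real.exp (k * ξ)) ↔
      r * Real.exp ξ < 1 ∧ r * Real.exp (-ξ) < 1 := by
  have hnat (y : ℝ) : Summable (fun n : ℕ => p n * Real.exp y ^ n) ↔ r * Real.exp y < 1 :=
    summable_mul_pow_iff_of_ratio (fun n => hpos n)
      (fun n => by exact_mod_cast mul_le_succ_of_tendsto_ratio hpos hlc hr n)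
      (by exact_mod_cast hr.comp tendsto_natCast_atTop_atTop) (Real.exp_pos y)
  rw [summable_int_iff_summable_nat_and_neg, ← hnat, ← hnat]
  congr! 3 with n n
  · rw [Int.cast_natCast, Real.exp_nat_mul]
  · rw [heven, Int.cast_neg, Int.cast_natCast, neg_mul, ← mul_neg, Real.exp_nat_mul]

end

theorem mgf_convergence_interval_general (p : ℤ → ℝ)
    (heven : ∀ k : ℤ, p (-k) = p k)
    (hsupp : ∀ a b c : ℤ, a ≤ b → b ≤ c → 0 < p a → 0 < p c → 0 < p b)
    (hlc : ∀ k : ℤ, p (k - 1) * p (k + 1) ≤ p k ^ 2)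
    (hub : ∀ k : ℤ, ∃ m : ℤ, k ≤ m ∧ 0 < p m)
    (r : ℝ) (hr0 : 0 ≤ r) (hr1 : r < 1)
    (hr : Tendsto (fun k : ℤ => p (k + 1) / p k) atTop (nhds r)) :
    (∀ ξ : ℝ, Summable (fun k : ℤ => p k * Real.exp ((k : ℝ) * ξ)) ↔
        (r = 0 ∨ |ξ| < -Real.log r)) ∧
      (0 < r →
        Tendsto (fun ξ : ℝ => Real.log (∑' k : ℤ, p k * Real.exp ((k : ℝ) * ξ)))
          (nhdsWithin (-Real.log r) (Set.Iio (-Real.log r))) atTop) ∧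
      (r = 0 →
        Tendsto (fun ξ : ℝ => Real.log (∑' k : ℤ, p k * Real.exp ((k : ℝ) * ξ)))
          atTop atTop) := by
  have hpos := pos_of_even_of_unbounded_support heven hsupp hub
  have hterm_nonneg (ξ : ℝ) (k : ℤ) : 0 ≤ p k * Real.exp (k * ξ) :=
    (mul_pos (hpos k) (Real.exp_pos _)).le
  have hsum_iff (ξ : ℝ) :
      Summable (fun k : ℤ => p k * Real.exp (k * ξ)) ↔ r = 0 ∨ |ξ| < -Real.log r := by
    rw [summable_mgf_iff hpos heven hlc hr, mul_exp_lt_one_iff hr0, mul_exp_lt_one_iff hr0,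
      abs_lt, neg_lt]
    tauto
  refine ⟨hsum_iff, fun hr_pos => ?_, fun hr_zero => ?_⟩
  · have hξ_pos : 0 < -Real.log r := neg_pos.2 (Real.log_neg hr_pos hr1)
    refine Real.tendsto_log_atTop.comp (tendsto_tsum_atTop_of_not_summable nhdsWithin_le_nhds
      hterm_nonneg (fun k => by fun_prop) ?_ ?_)
    · filter_upwards [Ioo_mem_nhdsLT (neg_lt_self hξ_pos)] with ξ hξ
      exact (hsum_iff ξ).2 (Or.inr (abs_lt.2 hξ))
    · rw [hsum_iff, abs_of_pos hξ_pos]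
      simp [hr_pos.ne']
  · refine Real.tendsto_log_atTop.comp (tendsto_atTop_mono (fun ξ => ?_)
      (Real.tendsto_exp_atTop.const_mul_atTop (hpos 1)))
    simpa using ((hsum_iff ξ).2 (Or.inl hr_zero)).le_tsum 1 fun k _ => hterm_nonneg ξ k

/-- For an even, discrete log-concave p.m.f. `p` on `ℤ` with unbounded support
and ratio limit `r* = lim p(k+1)/p(k)`, the moment generating function
`φ(ξ) = Σ p(k) e^{kξ}` is finite exactly on `(-ξ*, ξ*)` where `ξ* = -log r*`
(`ξ* = +∞` if `r* = 0`), and `Λ = log φ` tends to `+∞` as `ξ → ξ*`. -/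
theorem mgf_convergence_interval (p : ℤ → ℝ)
    (hp0 : ∀ k, 0 ≤ p k) (hpsum : HasSum p 1)
    (heven : ∀ k : ℤ, p (-k) = p k)
    (hsupp : ∀ a b c : ℤ, a ≤ b → b ≤ c → 0 < p a → 0 < p c → 0 < p b)
    (hlc : ∀ k : ℤ, p (k - 1) * p (k + 1) ≤ p k ^ 2)
    (hub : ∀ k : ℤ, ∃ m : ℤ, k ≤ m ∧ 0 < p m)
    (r : ℝ) (hr0 : 0 ≤ r) (hr1 : r < 1)
    (hr : Tendsto (fun k : ℤ => p (k + 1) / p k) atTop (nhds r)) :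
    (∀ ξ : ℝ, Summable (fun k : ℤ => p k * Real.exp ((k : ℝ) * ξ)) ↔
        (r = 0 ∨ |ξ| < -Real.log r)) ∧
      (0 < r →
        Tendsto (fun ξ : ℝ => Real.log (∑' k : ℤ, p k * Real.exp ((k : ℝ) * ξ)))
          (nhdsWithin (-Real.log r) (Set.Iio (-Real.log r))) atTop) ∧
      (r = 0 →
        Tendsto (fun ξ : ℝ => Real.log (∑' k : ℤ, p k * Real.exp ((k : ℝ) * ξ)))
          atTop atTop) :=
  mgf_convergence_interval_general p heven hsupp hlc hub r hr0 hr1 hr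
end

section
/- Fix r, p ≥ 1 and k = ⌊r^p⌋. The set L_n = ℤ^n ∩ rB_p^n satisfies |L_n| = 2^k C(n,k) + O(n^{k-1}); more precisely, every x ∈ L_n with at least k non-zero coordinates has all coordinates in {-1,0,1} and exactly k non-zero coordinates, and the number of points of L_n with at most k-1 non-zero coordinates is at most e^{2⌊r⌋} n^{k-1}. -/
/-!
Write `hammingNorm x` for the number of non-zero coordinates of `x ∈ ℤⁿ`. Since `p ≥ 1`, each
non-zero coordinate contributes at least `1` to `∑ |xᵢ|^p`, and each coordinate with `|xᵢ| ≥ 2`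
at least `2`; hence a lattice point of `r B_p^n` with at least `k = ⌊r^p⌋` non-zero coordinates
has exactly `k` of them, all equal to `±1`. The remaining points have coordinates in
`[-⌊r⌋, ⌊r⌋]`, and sorting them by their support shows that there are at most
`∑_{j<k} C(n,j) (2⌊r⌋)^j ≤ n^{k-1} ∑_{j<k} (2⌊r⌋)^j / j! ≤ e^{2⌊r⌋} n^{k-1}` of them.
-/

open Finset Real

section Counting

variable {ι M : Type*} [Fintype ι] [DecidableEq ι] [Zero M] [DecidableEq M]

lemma filter_piFinset_support_eq {s : Finset M} (hs : 0 ∈ s) (t : Finset ι) :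
    {x ∈ Fintype.piFinset fun _ : ι => s | ({i | x i ≠ 0} : Finset ι) = t}
      = Fintype.piFinset fun i => if i ∈ t then s.erase 0 else {0} := by
  ext x
  simp only [mem_filter, Fintype.mem_piFinset, Finset.ext_iff, mem_univ, true_and]
  constructor
  · rintro ⟨hxs, hxt⟩ i
    by_cases hi : i ∈ t
    · simpa [hi, mem_erase] using ⟨(hxt i).2 hi, hxs i⟩
    · simpa [hi] using (hxt i).not.2 hi
  · intro hx
    refine ⟨fun i => ?_, fun i => ?_⟩ <;> have hxi := hx i <;> by_cases hi : i ∈ t <;>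
      simp only [hi, if_true, if_false, mem_erase, mem_singleton] at hxi
    exacts [hxi.2, hxi ▸ hs, iff_of_true hxi.1 hi, iff_of_false (not_not.2 hxi) hi]

lemma card_filter_piFinset_support_eq {s : Finset M} (hs : 0 ∈ s) (t : Finset ι) :
    #{x ∈ Fintype.piFinset fun _ : ι => s | ({i | x i ≠ 0} : Finset ι) = t}
      = #(s.erase 0) ^ #t := by
  simp only [filter_piFinset_support_eq hs, Fintype.card_piFinset, apply_ite card,
    card_singleton]
  rw [prod_ite_mem, univ_inter, prod_const]

lemma card_filter_piFinset_hammingNorm_eq {s : Finset M} (hs : 0 ∈ s) (j : ℕ) :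
    #{x ∈ Fintype.piFinset fun _ : ι => s | hammingNorm x = j}
      = (Fintype.card ι).choose j * #(s.erase 0) ^ j := by
  rw [card_eq_sum_card_fiberwise (f := fun x : ι → M => ({i | x i ≠ 0} : Finset ι))
    (s := {x ∈ Fintype.piFinset fun _ : ι => s | hammingNorm x = j})
    (t := powersetCard j univ) fun x hx => mem_powersetCard_univ.2 (mem_filter.1 hx).2]
  rw [sum_congr rfl fun t ht => ?_, sum_const, card_powersetCard, card_univ, smul_eq_mul]
  rw [mem_powersetCard_univ] at ht
  rw [filter_filter, ← ht, ← card_filter_piFinset_support_eq hs t]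
  congr 1
  exact filter_congr fun x _ => ⟨fun h => h.2, fun h => ⟨h ▸ rfl, h⟩⟩

lemma card_filter_piFinset_hammingNorm_lt {s : Finset M} (hs : 0 ∈ s) (k : ℕ) :
    #{x ∈ Fintype.piFinset fun _ : ι => s | hammingNorm x < k}
      = ∑ j ∈ range k, (Fintype.card ι).choose j * #(s.erase 0) ^ j := by
  rw [card_eq_sum_card_fiberwise (f := hammingNorm)
    (s := {x ∈ Fintype.piFinset fun _ : ι => s | hammingNorm x < k}) (t := range k)
    fun x hx => mem_range.2 (mem_filter.1 hx).2]
  refine sum_congr rfl fun j hj => ?_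
  rw [filter_filter, ← card_filter_piFinset_hammingNorm_eq hs j]
  exact congrArg card <| filter_congr fun x _ =>
    ⟨fun h => h.2, fun h => ⟨h ▸ mem_range.1 hj, h⟩⟩

end Counting

lemma card_Icc_neg_erase_zero (m : ℕ) : #((Icc (-(m : ℤ)) m).erase 0) = 2 * m := by
  rw [card_erase_of_mem (by simp), Int.card_Icc]
  omega

lemma sum_range_choose_mul_pow_le_exp_mul_pow {n : ℕ} (hn : 1 ≤ n) {c : ℝ} (hc : 0 ≤ c)
    (k : ℕ) : ∑ j ∈ range k, (n.choose j : ℝ) * c ^ j ≤ exp c * n ^ (k - 1) :=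
  calc ∑ j ∈ range k, (n.choose j : ℝ) * c ^ j
      ≤ ∑ j ∈ range k, (n : ℝ) ^ (k - 1) * (c ^ j / j.factorial) := by
        refine sum_le_sum fun j hj => ?_
        have hjk : j ≤ k - 1 := by have := mem_range.1 hj; omega
        calc (n.choose j : ℝ) * c ^ j ≤ (n : ℝ) ^ j / j.factorial * c ^ j := by
              gcongr; exact_mod_cast Nat.choose_le_pow_div j n
          _ ≤ (n : ℝ) ^ (k - 1) / j.factorial * c ^ j := by
              gcongr; exact_mod_cast hn
          _ = _ := by ring
    _ = n ^ (k - 1) * ∑ j ∈ range k, c ^ j / j.factorial := (mul_sum ..).symm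
    _ ≤ n ^ (k - 1) * exp c := by gcongr; exact sum_le_exp_of_nonneg hc k
    _ = exp c * n ^ (k - 1) := mul_comm ..

section LatticePoints

variable {ι : Type*} [Fintype ι] {p : ℝ}

lemma hammingNorm_add_card_two_le_abs_le_sum_rpow (hp : 1 ≤ p) (x : ι → ℤ) :
    ((hammingNorm x + #{i | 2 ≤ |x i|} : ℕ) : ℝ) ≤ ∑ i, |(x i : ℝ)| ^ p := by
  have coord_bound (z : ℤ) : (if z ≠ 0 then 1 else 0 : ℝ) + (if 2 ≤ |z| then 1 else 0)
      ≤ |(z : ℝ)| ^ p := by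
    by_cases hz : z = 0
    · simp [hz, rpow_nonneg]
    have h1 : (1 : ℝ) ≤ |(z : ℝ)| := by exact_mod_cast Int.one_le_abs hz
    refine le_trans ?_ (self_le_rpow_of_one_le h1 hp)
    rw [← Int.cast_abs]
    have : (if z ≠ 0 then 1 else 0 : ℤ) + (if 2 ≤ |z| then 1 else 0) ≤ |z| := by
      rcases abs_cases z with ⟨h, _⟩ | ⟨h, _⟩ <;> split_ifs <;> omega
    exact_mod_cast this
  simp only [hammingNorm, Nat.cast_add, card_filter, Nat.cast_sum, Nat.cast_ite, Nat.cast_one,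
    Nat.cast_zero, ← sum_add_distrib]
  exact sum_le_sum fun i _ => coord_bound (x i)

lemma abs_le_one_and_hammingNorm_eq_of_floor_le_hammingNorm (hp : 1 ≤ p) {r : ℝ} {x : ι → ℤ}
    (hx : ∑ i, |(x i : ℝ)| ^ p ≤ r ^ p) (hk : ⌊r ^ p⌋₊ ≤ hammingNorm x) :
    (∀ i, |x i| ≤ 1) ∧ hammingNorm x = ⌊r ^ p⌋₊ := by
  have hle := Nat.le_floor ((hammingNorm_add_card_two_le_abs_le_sum_rpow hp x).trans hx)
  have hbig : #{i | 2 ≤ |x i|} = 0 := by omega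
  refine ⟨fun i => ?_, by omega⟩
  have := filter_eq_empty_iff.1 (card_eq_zero.1 hbig) (mem_univ i)
  omega

lemma natAbs_le_floor_of_sum_rpow_le (hp : 0 < p) {r : ℝ} (hr : 0 ≤ r) {x : ι → ℤ}
    (hx : ∑ i, |(x i : ℝ)| ^ p ≤ r ^ p) (i : ι) : (x i).natAbs ≤ ⌊r⌋₊ := by
  refine Nat.le_floor ?_
  rw [Nat.cast_natAbs, Int.cast_abs, ← rpow_le_rpow_iff (abs_nonneg _) hr hp]
  exact (single_le_sum (fun j _ => by positivity) (mem_univ i)).trans hx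

lemma sum_abs_rpow_eq_hammingNorm (hp : p ≠ 0) {x : ι → ℤ} (hx : ∀ i, |x i| ≤ 1) :
    ∑ i, |(x i : ℝ)| ^ p = hammingNorm x := by
  rw [hammingNorm, card_filter, Nat.cast_sum]
  refine sum_congr rfl fun i _ => ?_
  rcases Int.abs_le_one_iff.1 (hx i) with h | h | h <;> simp [h, hp]

lemma ncard_sum_rpow_le_and_hammingNorm_lt_le [Nonempty ι] (hp : 0 < p) {r : ℝ}
    (hr : 0 ≤ r) (k : ℕ) :
    ({x : ι → ℤ | ∑ i, |(x i : ℝ)| ^ p ≤ r ^ p ∧ hammingNorm x < k}.ncard : ℝ)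
      ≤ exp (2 * ⌊r⌋₊) * Fintype.card ι ^ (k - 1) := by
  classical
  set m := ⌊r⌋₊
  have hsub : {x : ι → ℤ | ∑ i, |(x i : ℝ)| ^ p ≤ r ^ p ∧ hammingNorm x < k}
      ⊆ ↑{x ∈ Fintype.piFinset fun _ : ι => Icc (-(m : ℤ)) m | hammingNorm x < k} := by
    rintro x ⟨hx, hxk⟩
    refine mem_filter.2 ⟨Fintype.mem_piFinset.2 fun i => mem_Icc.2 ?_, hxk⟩
    have := natAbs_le_floor_of_sum_rpow_le hp hr hx i
    omega
  calc _ ≤ (#{x ∈ Fintype.piFinset fun _ : ι => Icc (-(m : ℤ)) m | hammingNorm x < k} : ℝ) :=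
        mod_cast (Set.ncard_le_ncard hsub).trans_eq (Set.ncard_coe_finset _)
    _ = ∑ j ∈ range k, ((Fintype.card ι).choose j : ℝ) * (2 * m) ^ j := by
        rw [card_filter_piFinset_hammingNorm_lt (by simp), card_Icc_neg_erase_zero]
        norm_cast
    _ ≤ _ := sum_range_choose_mul_pow_le_exp_mul_pow Fintype.card_pos (by positivity) _

end LatticePoints

/-- Lattice points of `r B_p^n`: for `r, p ≥ 1` and `k = ⌊r^p⌋`,
`L_n = ℤⁿ ∩ r B_p^n` satisfies `|L_n| = 2^k C(n,k) + O(n^{k-1})`. Precisely: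
every `x ∈ L_n` with at least `k` non-zero coordinates has all coordinates in
`{-1,0,1}` and exactly `k` non-zero coordinates; the number of points of `L_n`
with at most `k-1` non-zero coordinates is at most `e^{2⌊r⌋} n^{k-1}`; and the
set `A_n ⊆ L_n` of sign vectors with exactly `k` non-zero coordinates has
cardinality `2^k C(n,k)`. -/
theorem lattice_ball_cardinality (n : ℕ) (hn : 1 ≤ n) (r p : ℝ) (hr : 1 ≤ r) (hp : 1 ≤ p)
    (k : ℕ) (hk : k = ⌊r ^ p⌋₊)
    (L : Set (Fin n → ℤ)) (hL : L = {x | ∑ i, ((|x i| : ℝ)) ^ p ≤ r ^ p})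
    (A : Set (Fin n → ℤ))
    (hA : A = {x | (∀ i, |x i| ≤ 1) ∧ (Finset.univ.filter fun i => x i ≠ 0).card = k}) :
    (∀ x ∈ L, k ≤ (Finset.univ.filter fun i => x i ≠ 0).card →
        (∀ i, x i = -1 ∨ x i = 0 ∨ x i = 1) ∧
          (Finset.univ.filter fun i => x i ≠ 0).card = k) ∧
      ((Set.ncard {x ∈ L | (Finset.univ.filter fun i => x i ≠ 0).card ≤ k - 1} : ℝ)
          ≤ Real.exp (2 * (⌊r⌋₊ : ℝ)) * (n : ℝ) ^ (k - 1)) ∧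
      A ⊆ L ∧ Set.ncard A = 2 ^ k * Nat.choose n k := by
  subst hL hA
  have hp0 : 0 < p := by linarith
  have hk1 : 1 ≤ k := hk ▸ Nat.le_floor (by simpa using one_le_rpow hr hp0.le)
  refine ⟨fun x hx hge => ?_, ?_, fun x ⟨hx, hxk⟩ => ?_, ?_⟩
  · obtain ⟨hx1, hxk⟩ := abs_le_one_and_hammingNorm_eq_of_floor_le_hammingNorm hp hx (hk ▸ hge)
    refine ⟨fun i => ?_, hk ▸ hxk⟩
    rcases Int.abs_le_one_iff.1 (hx1 i) with h | h | h <;> simp [h]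
  · have : Nonempty (Fin n) := ⟨⟨0, hn⟩⟩
    have hset : {x ∈ {x : Fin n → ℤ | ∑ i, |(x i : ℝ)| ^ p ≤ r ^ p} | #{i | x i ≠ 0} ≤ k - 1}
        = {x : Fin n → ℤ | ∑ i, |(x i : ℝ)| ^ p ≤ r ^ p ∧ hammingNorm x < k} := by
      ext x
      exact and_congr_right fun _ => by unfold hammingNorm; omega
    rw [hset]
    simpa only [Fintype.card_fin] using
      ncard_sum_rpow_le_and_hammingNorm_lt_le (ι := Fin n) hp0 (by linarith) k
  · show ∑ i, |(x i : ℝ)| ^ p ≤ r ^ p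
    rw [sum_abs_rpow_eq_hammingNorm hp0.ne' hx, show hammingNorm x = k from hxk, hk]
    exact Nat.floor_le (by positivity)
  · have hA : {x : Fin n → ℤ | (∀ i, |x i| ≤ 1) ∧ #{i | x i ≠ 0} = k}
        = ↑{x ∈ Fintype.piFinset fun _ : Fin n => Icc (-1 : ℤ) 1 | hammingNorm x = k} := by
      ext x
      simp [abs_le, hammingNorm]
    have hsigns : #((Icc (-1 : ℤ) 1).erase 0) = 2 := by decide
    rw [hA, Set.ncard_coe_finset, card_filter_piFinset_hammingNorm_eq (by simp),
      Fintype.card_fin, hsigns, mul_comm]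
end
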